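/- arXiv:1710.00083 — 5 statements merged into one kernel-verified Lean document; each statement's English description precedes it below -/
import Mathlib

section
/- Let G be the threshold graph encoded by a code consisting of t ≥ 0 zeros followed by a word w that is a concatenation of α copies of a = 01 and β copies of b = 10 in any order, where the final digit of w is the rightmost digit of the code. Then G has t + 2(α+β) vertices and exactly (α+β)² − α edges; in particular the number of edges does not depend on t or on the order of the letters a and b in w. -/
/-!
Common definitions: threshold graphs from binary codes, counts of matchings and
independent sets, lex and colex graphs, and almost alternating codes.

A binary code is a `List Bool` whose head is the *leftmost* (most significant,
last added) digit; `true` stands for the digit `1` and `false` for `0`.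
Reading the code from right to left, each digit adds a vertex: a `1` adds a
dominating vertex and a `0` adds an isolated vertex.  Equivalently, the vertex
at position `i` (from the left) is adjacent to every vertex to its right iff
its digit is `1`.  Note that the value of the rightmost digit (the star) never
affects the graph.
-/

/-- The threshold graph encoded by a binary code `σ`. -/
def threshOf (σ : List Bool) : SimpleGraph (Fin σ.length) where
  Adj i j := i ≠ j ∧ σ.get (min i j) = true
  symm := by
    constructor
    intro i j h
    refine ⟨h.1.symm, ?_⟩
    rw [min_comm]
    exact h.2
  loopless := by
    constructor
    intro i h
    exact h.1 rfl

/-- The number of edges of a graph. -/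
noncomputable def edgeCount {V : Type*} (G : SimpleGraph V) : ℕ := Nat.card G.edgeSet

/-- `M` is a matching of `G`: a set of pairwise disjoint edges of `G`. -/
def IsMatchingSet {V : Type*} (G : SimpleGraph V) (M : Finset (Sym2 V)) : Prop :=
  (∀ e ∈ M, e ∈ G.edgeSet) ∧ ∀ e ∈ M, ∀ f ∈ M, e ≠ f → ∀ v : V, v ∈ e → v ∉ f

/-- `m(G)`: the total number of matchings of `G` (including the empty matching). -/
noncomputable def matchCount {V : Type*} (G : SimpleGraph V) : ℕ :=
  Nat.card {M : Finset (Sym2 V) // IsMatchingSet G M}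

/-- `m_k(G)`: the number of matchings of `G` of size `k`. -/
noncomputable def matchCountK {V : Type*} (G : SimpleGraph V) (k : ℕ) : ℕ :=
  Nat.card {M : Finset (Sym2 V) // IsMatchingSet G M ∧ M.card = k}

/-- `i(G)`: the number of independent sets of `G` (including the empty set). -/
noncomputable def indCount {V : Type*} (G : SimpleGraph V) : ℕ :=
  Nat.card {S : Finset V // ∀ u ∈ S, ∀ v ∈ S, ¬ G.Adj u v}

/-- `i_k(G)`: the number of independent sets of `G` of size `k`. -/
noncomputable def indCountK {V : Type*} (G : SimpleGraph V) (k : ℕ) : ℕ :=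
  Nat.card {S : Finset V // (∀ u ∈ S, ∀ v ∈ S, ¬ G.Adj u v) ∧ S.card = k}

/-- Two codes encode the same threshold graph: they have the same length and agree
except possibly in the rightmost (starred) digit. -/
def CodeEquiv (σ τ : List Bool) : Prop := σ.length = τ.length ∧ σ.dropLast = τ.dropLast

/-- Words that are concatenations of copies of the letters `a = 01` and `b = 10`. -/
inductive IsABWord : List Bool → Prop
  | nil : IsABWord []
  | a {w : List Bool} : IsABWord w → IsABWord (false :: true :: w)
  | b {w : List Bool} : IsABWord w → IsABWord (true :: false :: w)

/-- `w` is a concatenation of `α` copies of the letter `a = 01` and `β` copies of the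
letter `b = 10`, in some order. -/
def IsABWordWith (α β : ℕ) (w : List Bool) : Prop :=
  ∃ ls : List (List Bool), (∀ x ∈ ls, x = [false, true] ∨ x = [true, false]) ∧
    ls.count [false, true] = α ∧ ls.count [true, false] = β ∧ w = ls.flatten

/-- A code is almost alternating if (possibly after reinterpreting the starred rightmost
digit) it is an initial constant block followed by a word in the letters `a = 01` and
`b = 10`, either using the rightmost digit as the final digit of the last letter
(unstarred case) or keeping the rightmost digit separate after the word (starred case). -/
def IsAlmostAltCode (σ : List Bool) : Prop :=
  ∃ τ : List Bool, CodeEquiv σ τ ∧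
    ∃ (t : ℕ) (c : Bool) (w : List Bool), IsABWord w ∧
      (τ = List.replicate t c ++ w ∨ ∃ d : Bool, τ = List.replicate t c ++ w ++ [d])

/-- A small almost alternating code: the initial block consists of `0`'s (or is empty). -/
def IsSmallAACode (σ : List Bool) : Prop :=
  ∃ τ : List Bool, CodeEquiv σ τ ∧
    ∃ (t : ℕ) (w : List Bool), IsABWord w ∧
      (τ = List.replicate t false ++ w ∨ ∃ d : Bool, τ = List.replicate t false ++ w ++ [d])

/-- A large almost alternating code: the initial block is a nonempty block of `1`'s. -/
def IsLargeAACode (σ : List Bool) : Prop :=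
  ∃ τ : List Bool, CodeEquiv σ τ ∧
    ∃ (t : ℕ) (w : List Bool), 1 ≤ t ∧ IsABWord w ∧
      (τ = List.replicate t true ++ w ∨ ∃ d : Bool, τ = List.replicate t true ++ w ++ [d])

/-- A code has a bracketed string if (possibly after reinterpreting the starred rightmost
digit) it contains a substring `1 0^j 1` or `0 1^j 0` with `j ≥ 3`. -/
def HasBracketedString (σ : List Bool) : Prop :=
  ∃ τ : List Bool, CodeEquiv σ τ ∧ ∃ (x y : List Bool) (j : ℕ), 3 ≤ j ∧
    (τ = x ++ [true] ++ List.replicate j false ++ [true] ++ y ∨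
     τ = x ++ [false] ++ List.replicate j true ++ [false] ++ y)

/-- A code has a separation issue if it contains two pairs of repeated digits separated by
a substring of odd length, where the first pair is immediately preceded by the opposite
digit and the second pair is followed by at least one further digit. -/
def HasSeparationIssue (σ : List Bool) : Prop :=
  ∃ (x m y : List Bool) (d c : Bool),
    Odd m.length ∧ y ≠ [] ∧ σ = x ++ [!d, d, d] ++ m ++ [c, c] ++ y

/-- The colex graph `C(n,e)`: the graph on `Fin n` whose edges are the first `e` pairs in
the colexicographic order.  The pair `{i, j}` with `i < j` has rank `j(j-1)/2 + i` in
this order. -/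
def colexGraph (n e : ℕ) : SimpleGraph (Fin n) where
  Adj i j := i ≠ j ∧ max i.val j.val * (max i.val j.val - 1) / 2 + min i.val j.val < e
  symm := by
    constructor
    intro i j h
    refine ⟨h.1.symm, ?_⟩
    rw [max_comm j.val i.val, min_comm j.val i.val]
    exact h.2
  loopless := by
    constructor
    intro i h
    exact h.1 rfl

/-- The lex graph `L(n,e)`: the graph on `Fin n` whose edges are the first `e` pairs in
the lexicographic order.  The pair `{i, j}` with `i < j` has rank
`i(n-1) - i(i-1)/2 + (j - i - 1)` in this order. -/
def lexGraph (n e : ℕ) : SimpleGraph (Fin n) where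
  Adj i j := i ≠ j ∧
    min i.val j.val * (n - 1) - min i.val j.val * (min i.val j.val - 1) / 2
      + (max i.val j.val - min i.val j.val - 1) < e
  symm := by
    constructor
    intro i j h
    refine ⟨h.1.symm, ?_⟩
    rw [max_comm j.val i.val, min_comm j.val i.val]
    exact h.2
  loopless := by
    constructor
    intro i h
    exact h.1 rfl


/-! In `threshOf σ` a vertex is joined to each vertex to its right exactly when its digit is
`1`, so the edges are the pairs `i < j` with `σ i = 1`. Leading zeros contribute nothing; a
letter with `k` letters to its right contributes `2k` if it is `a = 01` and `2k + 1` if it is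
`b = 10`. Summing over `n = α + β` letters gives `n (n - 1) + β = n² - α`. -/

namespace SimpleGraph

variable {V : Type*} [LinearOrder V] (G : SimpleGraph V)

def edgeSetEquivLtAdj : G.edgeSet ≃ {p : V × V // p.1 < p.2 ∧ G.Adj p.1 p.2} :=
  (Sym2.sortEquiv.subtypeEquiv fun s => by
    induction s using Sym2.ind with
    | _ a b =>
      rcases le_total a b with h | h
      · simpa [h, lt_iff_le_and_ne] using Adj.ne
      · simpa [h, lt_iff_le_and_ne, G.adj_comm b a] using Adj.ne').trans
    (Equiv.subtypeSubtypeEquivSubtype fun h => h.1.le)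

theorem edgeCount_eq_card_lt_adj [Fintype V] [DecidableRel G.Adj] :
    edgeCount G = Fintype.card {p : V × V // p.1 < p.2 ∧ G.Adj p.1 p.2} := by
  rw [edgeCount, Nat.card_congr G.edgeSetEquivLtAdj, Nat.card_eq_fintype_card]

end SimpleGraph

def codeEdgeCount : List Bool → ℕ
  | [] => 0
  | d :: σ => (if d then σ.length else 0) + codeEdgeCount σ

theorem threshOf_adj_of_lt {σ : List Bool} {i j : Fin σ.length} (h : i < j) :
    (threshOf σ).Adj i j ↔ σ.get i = true := by
  change i ≠ j ∧ σ.get (min i j) = true ↔ _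
  rw [min_eq_left h.le]
  exact and_iff_right h.ne

theorem edgeCount_threshOf_eq_sum (σ : List Bool) :
    edgeCount (threshOf σ) =
      ∑ i : Fin σ.length, if σ.get i then σ.length - 1 - i else 0 := by
  classical
  rw [SimpleGraph.edgeCount_eq_card_lt_adj, Fintype.card_subtype, Finset.card_filter,
    ← Finset.univ_product_univ, Finset.sum_product]
  refine Finset.sum_congr rfl fun i _ => ?_
  simp only [and_congr_right threshOf_adj_of_lt]
  rw [List.get_eq_getElem]
  split_ifs with hi
  · simp [hi, ← Fin.card_Ioi, Finset.filter_lt_eq_Ioi]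
  · simp [hi]

theorem codeEdgeCount_eq_sum (σ : List Bool) :
    codeEdgeCount σ = ∑ i : Fin σ.length, if σ.get i then σ.length - 1 - i else 0 := by
  induction σ with
  | nil => rfl
  | cons d σ ih =>
    simp [codeEdgeCount, ih, Fin.sum_univ_succ, Nat.sub_sub, add_comm]

theorem codeEdgeCount_replicate_false_append (t : ℕ) (σ : List Bool) :
    codeEdgeCount (List.replicate t false ++ σ) = codeEdgeCount σ := by
  induction t with
  | zero => rfl
  | succ t ih => simpa [List.replicate_succ, codeEdgeCount] using ih

theorem edgeCount_threshOf (σ : List Bool) : edgeCount (threshOf σ) = codeEdgeCount σ := by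
  rw [edgeCount_threshOf_eq_sum, codeEdgeCount_eq_sum]

section Letters

variable {ls : List (List Bool)}

theorem length_flatten_of_letters (hls : ∀ x ∈ ls, x = [false, true] ∨ x = [true, false]) :
    ls.flatten.length = 2 * ls.length := by
  induction ls with
  | nil => rfl
  | cons x ls ih =>
    obtain ⟨hx, hrest⟩ := List.forall_mem_cons.mp hls
    rcases hx with rfl | rfl <;> simp [ih hrest] <;> ring

theorem count_add_count_of_letters (hls : ∀ x ∈ ls, x = [false, true] ∨ x = [true, false]) :
    ls.count [false, true] + ls.count [true, false] = ls.length := by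
  induction ls with
  | nil => rfl
  | cons x ls ih =>
    obtain ⟨hx, hrest⟩ := List.forall_mem_cons.mp hls
    have := ih hrest
    rcases hx with rfl | rfl <;> simp <;> omega

theorem codeEdgeCount_flatten_add_count_of_letters
    (hls : ∀ x ∈ ls, x = [false, true] ∨ x = [true, false]) :
    codeEdgeCount ls.flatten + ls.count [false, true] = ls.length ^ 2 := by
  induction ls with
  | nil => rfl
  | cons x ls ih =>
    obtain ⟨hx, hrest⟩ := List.forall_mem_cons.mp hls
    have := ih hrest
    rcases hx with rfl | rfl <;>
      simp [codeEdgeCount, length_flatten_of_letters hrest] <;> ring_nf <;> omega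

end Letters

theorem IsABWordWith.length_eq {α β : ℕ} {w : List Bool} (hw : IsABWordWith α β w) :
    w.length = 2 * (α + β) := by
  obtain ⟨ls, hls, rfl, rfl, rfl⟩ := hw
  rw [length_flatten_of_letters hls, count_add_count_of_letters hls]

theorem IsABWordWith.codeEdgeCount_add {α β : ℕ} {w : List Bool} (hw : IsABWordWith α β w) :
    codeEdgeCount w + α = (α + β) ^ 2 := by
  obtain ⟨ls, hls, rfl, rfl, rfl⟩ := hw
  rw [codeEdgeCount_flatten_add_count_of_letters hls, count_add_count_of_letters hls]

/-- The threshold graph encoded by `t` zeros followed by a word `w`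
made of `α` copies of `a = 01` and `β` copies of `b = 10` (in any order, the last digit
of `w` being the rightmost digit of the code) has `t + 2(α+β)` vertices and exactly
`(α+β)² − α` edges. -/
theorem small_unstarred_edge_count (t a b : ℕ) (w : List Bool)
    (hw : IsABWordWith a b w) :
    (List.replicate t false ++ w).length = t + 2 * (a + b) ∧
      edgeCount (threshOf (List.replicate t false ++ w)) = (a + b) ^ 2 - a := by
  refine ⟨by simp [hw.length_eq], ?_⟩
  rw [edgeCount_threshOf, codeEdgeCount_replicate_false_append]
  have := hw.codeEdgeCount_add
  omega
end

section
/- If a binary code has neither a bracketed string nor a separation issue, then the threshold graph it encodes is almost alternating. -/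
/-!
Split the code, after its initial constant block, into consecutive pairs of digits. If no
pair repeats a digit, except possibly one that ends the code, the code is almost
alternating: the pairs are letters `a` and `b`, and a repeated final pair becomes a letter
once the star is flipped. The first repeated pair `dd` after the block is preceded by `!d`,
and every later repeated pair not ending the code starts at even distance from it: at
distance one the run `!d ddd…` ends in `!d` or at the star, a bracketed string, and at odd
distance at least three there is a separation issue. So these pairs all start at positions
of one parity, and pairing from the last digit of the block or from the digit after it
avoids them.
-/

open List

/-- Cutting `s` into consecutive pairs from the left, every pair consists of two different
digits, except possibly a pair that ends `s`. -/
def AlignedPairsDistinct (s : List Bool) : Prop :=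
  ∀ (m y : List Bool) (c : Bool), Even m.length → y ≠ [] → s ≠ m ++ [c, c] ++ y

theorem CodeEquiv.append_left {s τ : List Bool} (h : CodeEquiv s τ) (x : List Bool) :
    CodeEquiv (x ++ s) (x ++ τ) := by
  obtain ⟨hlen, hdrop⟩ := h
  refine ⟨by simp [hlen], ?_⟩
  by_cases hs : s = []
  · subst hs
    rw [eq_nil_of_length_eq_zero hlen.symm]
  · have hτ : τ ≠ [] := by
      rintro rfl
      exact hs (eq_nil_of_length_eq_zero hlen)
    rw [dropLast_append_of_ne_nil hs, dropLast_append_of_ne_nil hτ, hdrop]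

theorem HasBracketedString.append_left {s : List Bool} (h : HasBracketedString s)
    (x : List Bool) : HasBracketedString (x ++ s) := by
  obtain ⟨τ, hτ, x', y, j, hj, hτ'⟩ := h
  exact ⟨x ++ τ, hτ.append_left x, x ++ x', y, j, hj, by rcases hτ' with rfl | rfl <;> simp⟩

theorem HasSeparationIssue.append_left {s : List Bool} (h : HasSeparationIssue s)
    (x : List Bool) : HasSeparationIssue (x ++ s) := by
  obtain ⟨x', m, y, d, c, hm, hy, rfl⟩ := h
  exact ⟨x ++ x', m, y, d, c, hm, hy, by simp⟩

theorem hasBracketedString_not_cons_replicate_append (d : Bool) {j : ℕ} (hj : 3 ≤ j)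
    {y : List Bool} (hy : y ≠ []) : HasBracketedString ((!d) :: (replicate j d ++ y)) := by
  induction y generalizing j with
  | nil => exact absurd rfl hy
  | cons e y ih =>
    by_cases he : e = d
    · subst he
      rcases eq_or_ne y [] with rfl | hy'
      · refine ⟨(!e) :: (replicate j e ++ [!e]), ⟨by simp, ?_⟩, [], [], j, hj, ?_⟩
        · rw [← cons_append, ← cons_append, dropLast_concat, dropLast_concat]
        · cases e <;> simp
      · simpa [replicate_succ'] using ih (j := j + 1) (by omega) hy'
    · refine ⟨_, ⟨rfl, rfl⟩, [], y, j, hj, ?_⟩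
      cases d <;> cases e <;> simp_all

theorem IsABWord.cons_cons {d e : Bool} (hde : d ≠ e) {w : List Bool} (hw : IsABWord w) :
    IsABWord (d :: e :: w) := by
  cases d <;> cases e
  all_goals first | exact absurd rfl hde | exact .a hw | exact .b hw

namespace AlignedPairsDistinct

theorem of_length_le_two {s : List Bool} (hs : s.length ≤ 2) : AlignedPairsDistinct s := by
  rintro m y c - hy rfl
  have := length_pos_of_ne_nil hy
  simp only [length_append, length_cons] at hs
  omega

theorem cons_cons {a b : Bool} {s : List Bool} (hab : a ≠ b) (hs : AlignedPairsDistinct s) :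
    AlignedPairsDistinct (a :: b :: s) := by
  intro m y c hm hy h
  rcases m with _ | ⟨_, _ | ⟨_, m⟩⟩
  · simp only [nil_append, cons_append, cons.injEq] at h
    exact hab (h.1.trans h.2.1.symm)
  · simp at hm
  · simp only [cons_append, append_assoc, nil_append, cons.injEq] at h
    exact hs m y c (by simpa [Nat.even_add_one] using hm) hy (by simpa using h.2.2)

theorem exists_codeEquiv_isABWord :
    ∀ {s : List Bool}, AlignedPairsDistinct s →
      ∃ τ w, CodeEquiv s τ ∧ IsABWord w ∧ (τ = w ∨ ∃ d, τ = w ++ [d])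
  | [], _ => ⟨[], [], ⟨rfl, rfl⟩, .nil, .inl rfl⟩
  | [d], _ => ⟨[d], [], ⟨rfl, rfl⟩, .nil, .inr ⟨d, rfl⟩⟩
  | [d, _], _ => ⟨[d, !d], [d, !d], ⟨rfl, rfl⟩, .cons_cons (Bool.self_ne_not d) .nil, .inl rfl⟩
  | d :: e :: f :: r, hs => by
    have hde : d ≠ e := fun h => hs [] (f :: r) d (by simp) (by simp) (by simp [h])
    obtain ⟨τ, w, hτ, hw, hτw⟩ := exists_codeEquiv_isABWord (s := f :: r)
      fun m y c hm hy h => hs (d :: e :: m) y c (by simpa [Nat.even_add_one] using hm) hy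
        (by simp [h])
    refine ⟨d :: e :: τ, d :: e :: w, hτ.append_left [d, e], .cons_cons hde hw, ?_⟩
    rcases hτw with rfl | ⟨d', rfl⟩
    · exact .inl rfl
    · exact .inr ⟨d', rfl⟩

theorem of_flip_double {d : Bool} {r : List Bool}
    (hb : ¬ HasBracketedString ((!d) :: d :: d :: r))
    (hs : ¬ HasSeparationIssue ((!d) :: d :: d :: r)) : AlignedPairsDistinct (d :: r) := by
  intro m y c hm hy h
  rcases m with _ | ⟨a, m⟩
  · simp only [nil_append, cons_append, cons.injEq] at h
    obtain ⟨rfl, rfl⟩ := h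
    exact hb <| by
      simpa [replicate] using hasBracketedString_not_cons_replicate_append d le_rfl hy
  · simp only [cons_append, append_assoc, nil_append, cons.injEq] at h
    obtain ⟨rfl, rfl⟩ := h
    exact hs ⟨[], m, y, d, c, by simpa [Nat.even_add_one] using hm, hy, by simp⟩

end AlignedPairsDistinct

theorem alignedPairsDistinct_or_tail_of_ne {e f : Bool} (hef : e ≠ f) (r : List Bool)
    (hb : ¬ HasBracketedString (e :: f :: r)) (hs : ¬ HasSeparationIssue (e :: f :: r)) :
    AlignedPairsDistinct (e :: f :: r) ∨ AlignedPairsDistinct (f :: r) := by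
  induction r generalizing e f with
  | nil => exact .inl (.of_length_le_two (by simp))
  | cons g r ih =>
    by_cases hfg : f = g
    · subst hfg
      obtain rfl := Bool.eq_not.mpr hef
      exact .inl ((AlignedPairsDistinct.of_flip_double hb hs).cons_cons hef)
    · rcases ih hfg (fun h => hb (h.append_left [e])) (fun h => hs (h.append_left [e]))
        with h | h
      · exact .inr h
      · exact .inl (h.cons_cons hef)

theorem isAlmostAltCode_replicate_append (t : ℕ) (c : Bool) {s : List Bool}
    (hs : AlignedPairsDistinct s) : IsAlmostAltCode (replicate t c ++ s) := by
  obtain ⟨τ, w, hτ, hw, rfl | ⟨d, rfl⟩⟩ := hs.exists_codeEquiv_isABWord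
  · exact ⟨_, hτ.append_left _, t, c, _, hw, .inl rfl⟩
  · exact ⟨_, hτ.append_left _, t, c, _, hw, .inr ⟨d, by simp⟩⟩

theorem eq_replicate_or_eq_replicate_append_flip (σ : List Bool) :
    (∃ n c, σ = replicate n c) ∨ ∃ k c ρ, σ = replicate k c ++ c :: (!c) :: ρ := by
  induction σ with
  | nil => exact .inl ⟨0, false, rfl⟩
  | cons a σ ih =>
    rcases ih with ⟨_ | n, c, rfl⟩ | ⟨k, c, ρ, rfl⟩
    · exact .inl ⟨1, a, rfl⟩
    · by_cases hca : c = a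
      · exact .inl ⟨n + 2, a, by simp [hca, replicate_succ]⟩
      · exact .inr ⟨0, a, replicate n c, by simp [Bool.eq_not.mpr hca, replicate_succ]⟩
    · by_cases hca : c = a
      · exact .inr ⟨k + 1, c, ρ, by simp [hca, replicate_succ]⟩
      · obtain rfl := Bool.eq_not.mpr (Ne.symm hca)
        refine .inr ⟨0, !c, (replicate k c ++ c :: (!c) :: ρ).tail, ?_⟩
        cases k <;> simp [replicate_succ]

/-- A binary code with neither a bracketed string nor a separation
issue encodes an almost alternating threshold graph. -/
theorem no_obstruction_implies_almost_alternating (σ : List Bool)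
    (h1 : ¬ HasBracketedString σ) (h2 : ¬ HasSeparationIssue σ) :
    IsAlmostAltCode σ := by
  obtain ⟨n, c, rfl⟩ | ⟨k, c, ρ, rfl⟩ := eq_replicate_or_eq_replicate_append_flip σ
  · simpa using isAlmostAltCode_replicate_append n c (s := [])
      (AlignedPairsDistinct.of_length_le_two (by simp))
  · rcases alignedPairsDistinct_or_tail_of_ne (Bool.self_ne_not c) ρ
      (fun h => h1 (h.append_left _)) (fun h => h2 (h.append_left _)) with h | h
    · exact isAlmostAltCode_replicate_append k c h
    · simpa [replicate_succ'] using isAlmostAltCode_replicate_append (k + 1) c h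
end

section
/- For all (possibly empty) binary strings σ and ρ, the threshold graphs G = T(σ 0110 ρ) and G' = T(σ 1001 ρ) have the same number of vertices and edges and satisfy m(G) = m(G') and m_k(G) = m_k(G') for every k ≥ 0. -/
/-!
Prepending a `0` to a code adds an isolated vertex, which leaves every `m_k` unchanged.
Prepending a `1` adds a dominating vertex `v`; a `(k+1)`-matching covering `v` is a `k`-matching
of the old graph plus an edge from `v` to one of the `|c| - 2k` vertices it leaves uncovered, so
`m_{k+1}(T(1c)) = m_{k+1}(T(c)) + (|c| - 2k) m_k(T(c))`.  Hence the sequence `m_•(T(dc))` is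
determined by `|c|` and `m_•(T(c))`, which reduces the claim to `σ = []`.  There, expanding both
`0110ρ` and `1001ρ` down to `ρ` gives the same combination of `m_k`, `m_{k-1}`, `m_{k-2}` of
`T(ρ)`.  Finally, edges are the matchings of size one and `m = ∑ₖ m_k`.
-/

open Finset
open scoped Classical

section Matchings

variable {V W : Type*}

lemma IsMatchingSet.insert_iff {G : SimpleGraph V} {M : Finset (Sym2 V)} {e : Sym2 V}
    (he : e ∉ M) :
    IsMatchingSet G (insert e M) ↔
      e ∈ G.edgeSet ∧ IsMatchingSet G M ∧ ∀ f ∈ M, ∀ x ∈ e, x ∉ f := by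
  simp only [IsMatchingSet, forall_mem_insert]
  constructor
  · rintro ⟨⟨heG, hMG⟩, ⟨-, he'⟩, hM'⟩
    exact ⟨heG, ⟨hMG, fun f hf g hg hfg => (hM' f hf).2 g hg hfg⟩,
      fun f hf => he' f hf fun hef => he (hef ▸ hf)⟩
  · rintro ⟨heG, ⟨hMG, hM⟩, hdisj⟩
    refine ⟨⟨heG, hMG⟩, ⟨fun h => absurd rfl h, fun f hf _ => hdisj f hf⟩,
      fun f hf => ⟨fun hfe x hxf hxe => hdisj f hf x hxe hxf, hM f hf⟩⟩

lemma IsMatchingSet.card_biUnion_toFinset {G : SimpleGraph V} {M : Finset (Sym2 V)}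
    (h : IsMatchingSet G M) : #(M.biUnion Sym2.toFinset) = 2 * #M := by
  rw [card_biUnion, sum_congr rfl fun e he => Sym2.card_toFinset_of_not_isDiag e
    (G.not_isDiag_of_mem_edgeSet (h.1 e he)), sum_const, smul_eq_mul, mul_comm]
  intro e he f hf hef
  exact disjoint_left.2 fun x hxe hxf =>
    h.2 e he f hf hef x (Sym2.mem_toFinset.1 hxe) (Sym2.mem_toFinset.1 hxf)

lemma edgeCount_eq_matchCountK_one (G : SimpleGraph V) : edgeCount G = matchCountK G 1 := by
  refine Nat.card_congr <|
    Equiv.ofBijective (fun e => ⟨{e.1}, ?_, card_singleton _⟩) ⟨?_, ?_⟩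
  · exact ⟨by simp, by simp +contextual⟩
  · intro e e' h
    simpa [Subtype.ext_iff] using h
  · rintro ⟨M, hM, hcard⟩
    obtain ⟨e, rfl⟩ := card_eq_one.1 hcard
    exact ⟨⟨e, hM.1 e (mem_singleton_self e)⟩, rfl⟩

lemma matchCountK_zero (G : SimpleGraph V) : matchCountK G 0 = 1 :=
  Nat.card_eq_one_iff_exists.2 ⟨⟨∅, by simp [IsMatchingSet]⟩,
    fun M => Subtype.ext (card_eq_zero.1 M.2.2)⟩

lemma Sym2.mem_range_map_of_forall_mem {f : W → V} {e : Sym2 V}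
    (h : ∀ x ∈ e, x ∈ Set.range f) : e ∈ Set.range (Sym2.map f) := by
  induction e using Sym2.ind with
  | _ a b =>
    obtain ⟨a, rfl⟩ := h _ (Sym2.mem_mk_left a b)
    obtain ⟨b, rfl⟩ := h _ (Sym2.mem_mk_right _ b)
    exact ⟨s(a, b), rfl⟩

lemma isMatchingSet_map_sym2Map_iff (H : SimpleGraph V) (f : W ↪ V) (N : Finset (Sym2 W)) :
    IsMatchingSet H (N.map f.sym2Map) ↔ IsMatchingSet (H.comap f) N := by
  have hedge : ∀ e : Sym2 W, Sym2.map f e ∈ H.edgeSet ↔ e ∈ (H.comap f).edgeSet := by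
    intro e
    induction e using Sym2.ind with
    | _ a b => rfl
  simp only [IsMatchingSet, forall_mem_map, Function.Embedding.sym2Map_apply, hedge,
    ne_eq, (Sym2.map.injective f.injective).eq_iff, Sym2.mem_map, forall_exists_index, and_imp]
  refine and_congr_right fun _ => forall₂_congr fun e _ => forall₂_congr fun e' _ =>
    imp_congr_right fun _ => ⟨fun h x hx hx' => h _ x hx rfl ⟨x, hx', rfl⟩, ?_⟩
  rintro h _ x hx rfl ⟨y, hy, hyx⟩
  exact h x hx (f.injective hyx ▸ hy)

variable [Fintype V]

lemma IsMatchingSet.card_uncovered_add {G : SimpleGraph V} {M : Finset (Sym2 V)}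
    (h : IsMatchingSet G M) : #{x | ∀ e ∈ M, x ∉ e} + 2 * #M = Fintype.card V := by
  have : ({x | ∀ e ∈ M, x ∉ e} : Finset V) = (M.biUnion Sym2.toFinset)ᶜ := by
    ext x; simp [Sym2.mem_toFinset]
  rw [this, ← h.card_biUnion_toFinset, card_compl_add_card]

noncomputable def matchings (G : SimpleGraph V) (k : ℕ) : Finset (Finset (Sym2 V)) :=
  {M | IsMatchingSet G M ∧ #M = k}

lemma matchCountK_eq_card_matchings (G : SimpleGraph V) (k : ℕ) :
    matchCountK G k = #(matchings G k) := by
  rw [matchCountK, Nat.card_eq_fintype_card, Fintype.card_subtype, matchings]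

lemma matchCount_eq_sum_matchCountK (G : SimpleGraph V) :
    matchCount G = ∑ k ∈ range (Fintype.card V + 1), matchCountK G k := by
  rw [matchCount, Nat.card_eq_fintype_card, Fintype.card_subtype,
    card_eq_sum_card_fiberwise (f := card) (t := range (Fintype.card V + 1)) fun M hM =>
      mem_range_succ_iff.2 (by have := (mem_filter.1 hM).2.card_uncovered_add; omega)]
  simp_rw [matchCountK_eq_card_matchings, matchings, filter_filter]

lemma matchCount_eq_of_matchCountK_eq [Fintype W] (G : SimpleGraph V) (G' : SimpleGraph W)
    (hcard : Fintype.card V = Fintype.card W) (h : ∀ k, matchCountK G k = matchCountK G' k) :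
    matchCount G = matchCount G' := by
  simp only [matchCount_eq_sum_matchCountK, hcard, h]

lemma card_matchings_comap [Fintype W] (H : SimpleGraph V) (f : W ↪ V) (k : ℕ) :
    #(matchings (H.comap f) k) =
      #{M ∈ matchings H k | ∀ e ∈ M, ∀ x ∈ e, x ∈ Set.range f} := by
  refine card_bij (fun N _ => N.map f.sym2Map) (fun N hN => ?_)
    (fun N _ N' _ h => map_injective _ h) (fun M hM => ?_)
  · simp only [matchings, mem_filter, mem_univ, true_and, card_map,
      isMatchingSet_map_sym2Map_iff] at hN ⊢
    refine ⟨hN, ?_⟩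
    simp only [forall_mem_map, Function.Embedding.sym2Map_apply, Sym2.mem_map]
    rintro e - x ⟨a, -, rfl⟩
    exact ⟨a, rfl⟩
  · simp only [matchings, mem_filter, mem_univ, true_and] at hM
    obtain ⟨⟨hMH, rfl⟩, hrange⟩ := hM
    obtain ⟨N, -, rfl⟩ := subset_map_iff.1 fun e he => by
      obtain ⟨e', rfl⟩ := Sym2.mem_range_map_of_forall_mem (hrange e he)
      exact mem_map_of_mem f.sym2Map (mem_univ e')
    exact ⟨N, by simpa [matchings, isMatchingSet_map_sym2Map_iff] using hMH, rfl⟩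

lemma card_matchings_succ_covering (H : SimpleGraph V) (v : V) (k : ℕ) :
    #{M ∈ matchings H (k + 1) | ∃ e ∈ M, v ∈ e} =
      ∑ M ∈ matchings H k with ∀ e ∈ M, v ∉ e,
        #{w | H.Adj v w ∧ ∀ e ∈ M, w ∉ e} := by
  rw [← card_sigma]
  symm
  have hnotMem : ∀ {M : Finset (Sym2 V)} (w : V), (∀ e ∈ M, v ∉ e) → s(v, w) ∉ M :=
    fun w hv hM => hv _ hM (Sym2.mem_mk_left v w)
  refine card_bij (fun p _ => insert s(v, p.2) p.1) (fun ⟨M, w⟩ hp => ?_)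
    (fun ⟨M, w⟩ hp ⟨M', w'⟩ hp' h => ?_) (fun M hM => ?_)
  · simp only [mem_sigma, matchings, mem_filter, mem_univ, true_and] at hp ⊢
    obtain ⟨⟨⟨hM, rfl⟩, hv⟩, hvw, hw⟩ := hp
    refine ⟨⟨(IsMatchingSet.insert_iff (hnotMem w hv)).2 ⟨hvw, hM, ?_⟩,
      card_insert_of_notMem (hnotMem w hv)⟩, _, mem_insert_self _ _, Sym2.mem_mk_left v w⟩
    intro f hf x hx
    rcases Sym2.mem_iff.1 hx with rfl | rfl
    exacts [hv f hf, hw f hf]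
  · simp only [mem_sigma, matchings, mem_filter, mem_univ, true_and] at hp hp' h
    have hww' : w = w' := by
      have := h ▸ mem_insert_self s(v, w) M
      rcases mem_insert.1 this with hvw | hM'
      exacts [Sym2.congr_right.1 hvw, absurd hM' (hnotMem w hp'.1.2)]
    subst hww'
    rw [← erase_insert (hnotMem w hp.1.2), h, erase_insert (hnotMem w hp'.1.2)]
  · simp only [matchings, mem_filter, mem_univ, true_and] at hM
    obtain ⟨⟨hM, hcard⟩, e, he, hve⟩ := hM
    obtain ⟨w, rfl⟩ := Sym2.mem_iff_exists.1 hve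
    have hMe := insert_erase he
    rw [← hMe, IsMatchingSet.insert_iff (notMem_erase _ _)] at hM
    obtain ⟨hvw, hN, hdisj⟩ := hM
    refine ⟨⟨M.erase s(v, w), w⟩, ?_, hMe⟩
    simp only [mem_sigma, matchings, mem_filter, mem_univ, true_and]
    refine ⟨⟨⟨hN, by rw [card_erase_of_mem he, hcard, add_tsub_cancel_right]⟩,
      fun f hf => hdisj f hf v (Sym2.mem_mk_left v w)⟩, hvw,
      fun f hf => hdisj f hf w (Sym2.mem_mk_right v w)⟩

lemma card_matchings_succ_covering_of_dominating (H : SimpleGraph V) {v : V}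
    (hv : ∀ w, w ≠ v → H.Adj v w) (k : ℕ) :
    (#{M ∈ matchings H (k + 1) | ∃ e ∈ M, v ∈ e} : ℤ) =
      (Fintype.card V - 1 - 2 * k) * #{M ∈ matchings H k | ∀ e ∈ M, v ∉ e} := by
  have hterm : ∀ M ∈ ({M ∈ matchings H k | ∀ e ∈ M, v ∉ e} : Finset _),
      (#{w | H.Adj v w ∧ ∀ e ∈ M, w ∉ e} : ℤ) = Fintype.card V - 1 - 2 * k := by
    intro M hM
    simp only [matchings, mem_filter, mem_univ, true_and] at hM
    obtain ⟨⟨hM, rfl⟩, hvM⟩ := hM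
    have herase : ({w | H.Adj v w ∧ ∀ e ∈ M, w ∉ e} : Finset V) =
        ({w | ∀ e ∈ M, w ∉ e} : Finset V).erase v := by
      ext w
      simp only [mem_erase, mem_filter, mem_univ, true_and]
      exact ⟨fun h => ⟨(H.ne_of_adj h.1).symm, h.2⟩, fun h => ⟨hv w h.1, h.2⟩⟩
    have hv_erase := card_erase_add_one (s := ({w | ∀ e ∈ M, w ∉ e} : Finset V)) (a := v)
      (by simpa using hvM)
    have huncovered := hM.card_uncovered_add
    rw [herase]
    omega
  rw [card_matchings_succ_covering, Nat.cast_sum, sum_congr rfl hterm, sum_const, nsmul_eq_mul,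
    mul_comm]

lemma matchCountK_comap_eq_card_uncovered [Fintype W] (H : SimpleGraph V)
    (f : W ↪ V) {v : V} (hf : Set.range f = {v}ᶜ) (k : ℕ) :
    matchCountK (H.comap f) k = #{M ∈ matchings H k | ∀ e ∈ M, v ∉ e} := by
  simp only [matchCountK_eq_card_matchings, card_matchings_comap, hf, Set.mem_compl_singleton_iff]
  congr! with M - e -
  exact ⟨fun h hv => h v hv rfl, fun h x hx hxv => h (hxv ▸ hx)⟩

-- Stated over `ℤ`: when the coefficient is negative, `2 * k` exceeds the number of vertices of
-- `H.comap f`, which then has no `k`-matchings.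
lemma matchCountK_succ_of_dominating [Fintype W] (H : SimpleGraph V) (f : W ↪ V)
    {v : V} (hf : Set.range f = {v}ᶜ) (hv : ∀ w, w ≠ v → H.Adj v w) (k : ℕ) :
    (matchCountK H (k + 1) : ℤ) = matchCountK (H.comap f) (k + 1) +
      (Fintype.card V - 1 - 2 * k) * matchCountK (H.comap f) k := by
  rw [matchCountK_comap_eq_card_uncovered H f hf, matchCountK_comap_eq_card_uncovered H f hf,
    ← card_matchings_succ_covering_of_dominating H hv, matchCountK_eq_card_matchings,
    ← card_filter_add_card_filter_not (fun M => ∀ e ∈ M, v ∉ e)]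
  simp only [not_forall, not_not, exists_prop, Nat.cast_add]

lemma matchCountK_comap_of_isolated [Fintype W] (H : SimpleGraph V) (f : W ↪ V)
    {v : V} (hf : Set.range f = {v}ᶜ) (hv : ∀ w, ¬ H.Adj v w) (k : ℕ) :
    matchCountK (H.comap f) k = matchCountK H k := by
  rw [matchCountK_comap_eq_card_uncovered H f hf, matchCountK_eq_card_matchings,
    filter_true_of_mem]
  intro M hM e he hve
  obtain ⟨w, rfl⟩ := Sym2.mem_iff_exists.1 hve
  simp only [matchings, mem_filter, mem_univ, true_and] at hM
  exact hv w (hM.1.1 _ he)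

end Matchings

lemma threshOf_cons_comap_succ (d : Bool) (c : List Bool) :
    (threshOf (d :: c)).comap (Fin.succEmb c.length) = threshOf c := by
  ext i j
  simp only [SimpleGraph.comap_adj, Fin.coe_succEmb, threshOf, ne_eq, Fin.succ_inj,
    ← Fin.strictMono_succ.monotone.map_min]
  rfl

lemma threshOf_cons_adj_zero (d : Bool) (c : List Bool) (j : Fin (c.length + 1)) :
    (threshOf (d :: c)).Adj 0 j ↔ j ≠ 0 ∧ d = true := by
  simp only [threshOf, min_eq_left (Fin.zero_le j), ne_comm]
  rfl

lemma matchCountK_threshOf_false_cons (c : List Bool) (k : ℕ) :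
    matchCountK (threshOf (false :: c)) k = matchCountK (threshOf c) k := by
  rw [← matchCountK_comap_of_isolated _ (Fin.succEmb c.length) (Fin.range_succ c.length)
    (by simp [threshOf_cons_adj_zero]), threshOf_cons_comap_succ]

lemma matchCountK_threshOf_true_cons_succ (c : List Bool) (k : ℕ) :
    (matchCountK (threshOf (true :: c)) (k + 1) : ℤ) =
      matchCountK (threshOf c) (k + 1) + (c.length - 2 * k) * matchCountK (threshOf c) k := by
  rw [matchCountK_succ_of_dominating _ (Fin.succEmb c.length) (Fin.range_succ c.length)
    (by simp [threshOf_cons_adj_zero]), threshOf_cons_comap_succ]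
  simp

lemma matchCountK_threshOf_cons_congr {X Y : List Bool} (hlen : X.length = Y.length)
    (h : ∀ k, matchCountK (threshOf X) k = matchCountK (threshOf Y) k) (d : Bool) (k : ℕ) :
    matchCountK (threshOf (d :: X)) k = matchCountK (threshOf (d :: Y)) k := by
  cases d
  · simp only [matchCountK_threshOf_false_cons, h]
  · cases k with
    | zero => simp only [matchCountK_zero]
    | succ k =>
      zify
      rw [matchCountK_threshOf_true_cons_succ, matchCountK_threshOf_true_cons_succ, h, h, hlen]

lemma matchCountK_threshOf_0110_cons (ρ : List Bool) (k : ℕ) :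
    matchCountK (threshOf (false :: true :: true :: false :: ρ)) k =
      matchCountK (threshOf (true :: false :: false :: true :: ρ)) k := by
  rw [matchCountK_threshOf_false_cons]
  rcases k with _ | _ | k
  · simp only [matchCountK_zero]
  · zify
    rw [matchCountK_threshOf_true_cons_succ _ 0, matchCountK_threshOf_true_cons_succ _ 0,
      matchCountK_threshOf_true_cons_succ (false :: false :: true :: ρ) 0]
    simp only [matchCountK_threshOf_false_cons]
    rw [matchCountK_threshOf_true_cons_succ ρ 0]
    simp only [matchCountK_zero, List.length_cons]
    push_cast
    ring
  · zify
    simp only [matchCountK_threshOf_false_cons, matchCountK_threshOf_true_cons_succ _ (k + 1),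
      matchCountK_threshOf_true_cons_succ _ k]
    simp only [List.length_cons]
    push_cast
    ring

lemma matchCountK_threshOf_ab_switch (σ ρ : List Bool) (k : ℕ) :
    matchCountK (threshOf (σ ++ [false, true, true, false] ++ ρ)) k =
      matchCountK (threshOf (σ ++ [true, false, false, true] ++ ρ)) k := by
  induction σ generalizing k with
  | nil => exact matchCountK_threshOf_0110_cons ρ k
  | cons d σ ih => exact matchCountK_threshOf_cons_congr (by simp) ih d k

/-- For all binary strings `σ` and `ρ`, the threshold graphs
`G = T(σ 0110 ρ)` and `G' = T(σ 1001 ρ)` have the same number of vertices and edges,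
and `m(G) = m(G')` and `m_k(G) = m_k(G')` for every `k`. -/
theorem ab_switch_matchings (σ ρ : List Bool) :
    (σ ++ [false, true, true, false] ++ ρ).length =
        (σ ++ [true, false, false, true] ++ ρ).length ∧
      edgeCount (threshOf (σ ++ [false, true, true, false] ++ ρ)) =
        edgeCount (threshOf (σ ++ [true, false, false, true] ++ ρ)) ∧
      matchCount (threshOf (σ ++ [false, true, true, false] ++ ρ)) =
        matchCount (threshOf (σ ++ [true, false, false, true] ++ ρ)) ∧
      ∀ k : ℕ, matchCountK (threshOf (σ ++ [false, true, true, false] ++ ρ)) k =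
        matchCountK (threshOf (σ ++ [true, false, false, true] ++ ρ)) k := by
  have hlen : (σ ++ [false, true, true, false] ++ ρ).length =
      (σ ++ [true, false, false, true] ++ ρ).length := by simp
  have hk := matchCountK_threshOf_ab_switch σ ρ
  refine ⟨hlen, ?_, matchCount_eq_of_matchCountK_eq _ _ (by simp) hk, hk⟩
  rw [edgeCount_eq_matchCountK_one, edgeCount_eq_matchCountK_one, hk]
end

section
/- Let σ and τ be (possibly empty) binary strings and let j ≥ 3. Then the threshold graphs G = T(σ 1 0^j 1 τ) and G' = T(σ 0 1 0^{j−2} 1 0 τ) have the same number of vertices and edges, m(G) < m(G'), and m_k(G) ≤ m_k(G') for every k ≥ 0. -/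
namespace Rm14
variable (σ τ : List Bool) (j : ℕ)
def LA : List Bool := σ ++ [true] ++ List.replicate j false ++ [true] ++ τ
def LB : List Bool := σ ++ [false, true] ++ List.replicate (j-2) false ++ [true, false] ++ τ

lemma lenA : (LA σ τ j).length = σ.length + j + 2 + τ.length := by simp [LA]; omega
lemma lenB (hj : 3 ≤ j) : (LB σ τ j).length = σ.length + j + 2 + τ.length := by simp [LB]; omega

lemma dA_lo (i : ℕ) (hi : i < σ.length) (h : i < (LA σ τ j).length) :
    (LA σ τ j)[i] = σ[i] := by
  simp [LA, List.getElem_append, hi]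

lemma dA_s (h : σ.length < (LA σ τ j).length) :
    (LA σ τ j)[σ.length] = true := by
  simp [LA, List.getElem_append]

lemma dA_mid (i : ℕ) (h1 : σ.length < i) (h2 : i ≤ σ.length + j) (h : i < (LA σ τ j).length) :
    (LA σ τ j)[i] = false := by
  simp only [LA, List.append_assoc, List.singleton_append, List.cons_append, List.nil_append]
  rw [List.getElem_append_right (by omega)]
  obtain ⟨k, hk⟩ : ∃ k, i - σ.length = k + 1 := ⟨i - σ.length - 1, by omega⟩
  simp only [hk]; rw [List.getElem_cons_succ, List.getElem_append_left (by simp; omega),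
    List.getElem_replicate]

lemma dA_y (h : σ.length + j + 1 < (LA σ τ j).length) :
    (LA σ τ j)[σ.length + j + 1] = true := by
  simp only [LA, List.append_assoc, List.singleton_append, List.cons_append, List.nil_append]
  rw [List.getElem_append_right (by omega)]
  obtain ⟨k, hk⟩ : ∃ k, σ.length + j + 1 - σ.length = k + 1 := ⟨j, by omega⟩
  simp only [hk]; rw [List.getElem_cons_succ, List.getElem_append_right (by simp; omega)]
  have : k - (List.replicate j false).length = 0 := by simp; omega
  simp only [this]; rw [List.getElem_cons_zero]

lemma dA_hi (i : ℕ) (h1 : σ.length + j + 2 ≤ i) (h : i < (LA σ τ j).length)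
    (h' : i - (σ.length + j + 2) < τ.length) :
    (LA σ τ j)[i] = τ[i - (σ.length + j + 2)] := by
  simp only [LA, List.append_assoc, List.singleton_append, List.cons_append, List.nil_append]
  rw [List.getElem_append_right (by omega)]
  obtain ⟨k, hk⟩ : ∃ k, i - σ.length = k + 1 := ⟨i - σ.length - 1, by omega⟩
  simp only [hk]; rw [List.getElem_cons_succ, List.getElem_append_right (by simp; omega)]
  obtain ⟨m, hm⟩ : ∃ m, k - (List.replicate j false).length = m + 1 := ⟨i - (σ.length + j + 2), by simp; omega⟩
  simp only [hm]; rw [List.getElem_cons_succ]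
  congr 1
  simp at hm
  omega

lemma dB_lo (hj : 3 ≤ j) (i : ℕ) (hi : i < σ.length) (h : i < (LB σ τ j).length) :
    (LB σ τ j)[i] = σ[i] := by
  simp [LB, List.getElem_append, hi]

lemma dB_s (hj : 3 ≤ j) (h : σ.length < (LB σ τ j).length) :
    (LB σ τ j)[σ.length] = false := by
  simp [LB, List.getElem_append]

lemma dB_x (hj : 3 ≤ j) (h : σ.length + 1 < (LB σ τ j).length) :
    (LB σ τ j)[σ.length + 1] = true := by
  simp only [LB, List.append_assoc, List.cons_append, List.nil_append]
  rw [List.getElem_append_right (by omega)]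
  have : σ.length + 1 - σ.length = 0 + 1 := by omega
  simp only [this]; rw [List.getElem_cons_succ, List.getElem_cons_zero]

lemma dB_mid (hj : 3 ≤ j) (i : ℕ) (h1 : σ.length + 1 < i) (h2 : i < σ.length + j)
    (h : i < (LB σ τ j).length) : (LB σ τ j)[i] = false := by
  simp only [LB, List.append_assoc, List.cons_append, List.nil_append]
  rw [List.getElem_append_right (by omega)]
  obtain ⟨k, hk⟩ : ∃ k, i - σ.length = k + 1 + 1 := ⟨i - σ.length - 2, by omega⟩
  simp only [hk]; rw [List.getElem_cons_succ, List.getElem_cons_succ,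
    List.getElem_append_left (by simp; omega), List.getElem_replicate]

lemma dB_y (hj : 3 ≤ j) (h : σ.length + j < (LB σ τ j).length) :
    (LB σ τ j)[σ.length + j] = true := by
  simp only [LB, List.append_assoc, List.cons_append, List.nil_append]
  rw [List.getElem_append_right (by omega)]
  obtain ⟨k, hk⟩ : ∃ k, σ.length + j - σ.length = k + 1 + 1 := ⟨j - 2, by omega⟩
  simp only [hk]; rw [List.getElem_cons_succ, List.getElem_cons_succ,
    List.getElem_append_right (by simp; omega)]
  have : k - (List.replicate (j-2) false).length = 0 := by simp; omega
  simp only [this]; rw [List.getElem_cons_zero]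

lemma dB_w (hj : 3 ≤ j) (h : σ.length + j + 1 < (LB σ τ j).length) :
    (LB σ τ j)[σ.length + j + 1] = false := by
  simp only [LB, List.append_assoc, List.cons_append, List.nil_append]
  rw [List.getElem_append_right (by omega)]
  obtain ⟨k, hk⟩ : ∃ k, σ.length + j + 1 - σ.length = k + 1 + 1 := ⟨j - 1, by omega⟩
  simp only [hk]; rw [List.getElem_cons_succ, List.getElem_cons_succ,
    List.getElem_append_right (by simp; omega)]
  have : k - (List.replicate (j-2) false).length = 0 + 1 := by simp; omega
  simp only [this]; rw [List.getElem_cons_succ, List.getElem_cons_zero]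

lemma dB_hi (hj : 3 ≤ j) (i : ℕ) (h1 : σ.length + j + 2 ≤ i) (h : i < (LB σ τ j).length)
    (h' : i - (σ.length + j + 2) < τ.length) :
    (LB σ τ j)[i] = τ[i - (σ.length + j + 2)] := by
  simp only [LB, List.append_assoc, List.cons_append, List.nil_append]
  rw [List.getElem_append_right (by omega)]
  obtain ⟨k, hk⟩ : ∃ k, i - σ.length = k + 1 + 1 := ⟨i - σ.length - 2, by omega⟩
  simp only [hk]; rw [List.getElem_cons_succ, List.getElem_cons_succ,
    List.getElem_append_right (by simp; omega)]
  obtain ⟨m, hm⟩ : ∃ m, k - (List.replicate (j-2) false).length = m + 1 + 1 :=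
    ⟨i - (σ.length + j + 2), by simp; omega⟩
  simp only [hm]; rw [List.getElem_cons_succ, List.getElem_cons_succ]
  congr 1
  simp at hm
  omega
-- PART 2: permutations and adjacency transfer
def f1 (s j i : ℕ) : ℕ :=
  if i = s then s + j else if i = s + j then s
  else if i = s + 1 then s + j + 1 else if i = s + j + 1 then s + 1 else i

def f2 (s j i : ℕ) : ℕ :=
  if i = s then s + 1 else if i = s + 1 then s
  else if i = s + j then s + j + 1 else if i = s + j + 1 then s + j else i

lemma f1_invol (s j : ℕ) (hj : 3 ≤ j) (i : ℕ) : f1 s j (f1 s j i) = i := by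
  unfold f1; split_ifs <;> omega

lemma f2_invol (s j : ℕ) (hj : 3 ≤ j) (i : ℕ) : f2 s j (f2 s j i) = i := by
  unfold f2; split_ifs <;> omega

lemma f1_bound (s j n i : ℕ) (hn : s + j + 2 ≤ n) (hi : i < n) : f1 s j i < n := by
  unfold f1; split_ifs <;> omega

lemma f2_bound (s j n i : ℕ) (hn : s + j + 2 ≤ n) (hi : i < n) : f2 s j i < n := by
  unfold f2; split_ifs <;> omega

variable (σ τ : List Bool) (j : ℕ) in
def ψ1 (hj : 3 ≤ j) : Fin (LA σ τ j).length → Fin (LB σ τ j).length := fun u =>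
  ⟨f1 σ.length j u.val, by
    have h1 := lenA σ τ j; have h2 := lenB σ τ j hj; have := u.isLt
    exact f1_bound _ _ _ _ (by omega) (by omega)⟩

variable (σ τ : List Bool) (j : ℕ) in
def ψ2 (hj : 3 ≤ j) : Fin (LA σ τ j).length → Fin (LB σ τ j).length := fun u =>
  ⟨f2 σ.length j u.val, by
    have h1 := lenA σ τ j; have h2 := lenB σ τ j hj; have := u.isLt
    exact f2_bound _ _ _ _ (by omega) (by omega)⟩

variable (σ τ : List Bool) (j : ℕ) in
def ψ2' (hj : 3 ≤ j) : Fin (LB σ τ j).length → Fin (LA σ τ j).length := fun u =>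
  ⟨f2 σ.length j u.val, by
    have h1 := lenA σ τ j; have h2 := lenB σ τ j hj; have := u.isLt
    exact f2_bound _ _ _ _ (by omega) (by omega)⟩

lemma ψ1_inj (σ τ : List Bool) (j : ℕ) (hj : 3 ≤ j) : Function.Injective (ψ1 σ τ j hj) := by
  intro u v h
  have : f1 σ.length j u.val = f1 σ.length j v.val := congrArg Fin.val h
  have h2 : u.val = v.val := by
    have := congrArg (f1 σ.length j) this
    rwa [f1_invol _ _ hj, f1_invol _ _ hj] at this
  exact Fin.ext h2

lemma ψ2_inj (σ τ : List Bool) (j : ℕ) (hj : 3 ≤ j) : Function.Injective (ψ2 σ τ j hj) := by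
  intro u v h
  have : f2 σ.length j u.val = f2 σ.length j v.val := congrArg Fin.val h
  have h2 : u.val = v.val := by
    have := congrArg (f2 σ.length j) this
    rwa [f2_invol _ _ hj, f2_invol _ _ hj] at this
  exact Fin.ext h2

lemma thresh_adj_of (L : List Bool) (u v : Fin L.length) (hne : u.val ≠ v.val)
    (h : min u.val v.val < L.length) (hd : L[min u.val v.val] = true) :
    (threshOf L).Adj u v :=
  ⟨fun he => hne (congrArg Fin.val he), hd⟩

lemma thresh_adj_elim (L : List Bool) (u v : Fin L.length) (h : (threshOf L).Adj u v) :
    u.val ≠ v.val ∧ ∃ _ : min u.val v.val < L.length, L[min u.val v.val] = true :=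
  ⟨fun he => h.1 (Fin.ext he), Nat.lt_of_le_of_lt (Nat.min_le_left _ _) u.isLt, h.2⟩

/-- core transfer lemma for `f2`, at the level of values -/
lemma core2 (σ τ : List Bool) (j : ℕ) (hj : 3 ≤ j) (a b : ℕ) (hab : a < b)
    (hb : b < σ.length + j + 2 + τ.length) (ha' : a < (LA σ τ j).length)
    (hd : (LA σ τ j)[a] = true)
    (hne : ¬(a = σ.length ∧ b = σ.length + 1))
    (hh : min (f2 σ.length j a) (f2 σ.length j b) < (LB σ τ j).length) :
    (LB σ τ j)[min (f2 σ.length j a) (f2 σ.length j b)] = true := by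
  have hA := lenA σ τ j
  have hB := lenB σ τ j hj
  rcases Nat.lt_or_ge a σ.length with h1 | h1
  · have hmin : min (f2 σ.length j a) (f2 σ.length j b) = a := by
      unfold f2; split_ifs <;> omega
    simp only [hmin]
    rw [dB_lo σ τ j hj a h1, ← dA_lo σ τ j a h1 ha']
    exact hd
  rcases Nat.eq_or_lt_of_le h1 with h2 | h2
  · have hbne : b ≠ σ.length + 1 := fun hb' => hne ⟨h2.symm, hb'⟩
    have hmin : min (f2 σ.length j a) (f2 σ.length j b) = σ.length + 1 := by
      unfold f2; split_ifs <;> omega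
    simp only [hmin]
    exact dB_x σ τ j hj (by omega)
  rcases Nat.lt_or_ge a (σ.length + j + 1) with h3 | h3
  · rw [dA_mid σ τ j a h2 (by omega) ha'] at hd; cases hd
  rcases Nat.eq_or_lt_of_le h3 with h4 | h4
  · have hmin : min (f2 σ.length j a) (f2 σ.length j b) = σ.length + j := by
      unfold f2; split_ifs <;> omega
    simp only [hmin]
    exact dB_y σ τ j hj (by omega)
  · have hmin : min (f2 σ.length j a) (f2 σ.length j b) = a := by
      unfold f2; split_ifs <;> omega
    simp only [hmin]
    rw [dB_hi σ τ j hj a (by omega) (by omega) (by omega),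
      ← dA_hi σ τ j a (by omega) ha' (by omega)]
    exact hd

/-- core transfer lemma for `f1`: needs `a, b ≠ s` -/
lemma core1 (σ τ : List Bool) (j : ℕ) (hj : 3 ≤ j) (a b : ℕ) (hab : a < b)
    (hb : b < σ.length + j + 2 + τ.length) (ha' : a < (LA σ τ j).length)
    (hd : (LA σ τ j)[a] = true)
    (hna : a ≠ σ.length) (hnb : b ≠ σ.length)
    (hh : min (f1 σ.length j a) (f1 σ.length j b) < (LB σ τ j).length) :
    (LB σ τ j)[min (f1 σ.length j a) (f1 σ.length j b)] = true := by
  have hA := lenA σ τ j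
  have hB := lenB σ τ j hj
  rcases Nat.lt_or_ge a σ.length with h1 | h1
  · have hmin : min (f1 σ.length j a) (f1 σ.length j b) = a := by
      unfold f1; split_ifs <;> omega
    simp only [hmin]
    rw [dB_lo σ τ j hj a h1, ← dA_lo σ τ j a h1 ha']
    exact hd
  have h2 : σ.length < a := by omega
  rcases Nat.lt_or_ge a (σ.length + j + 1) with h3 | h3
  · rw [dA_mid σ τ j a h2 (by omega) ha'] at hd; cases hd
  rcases Nat.eq_or_lt_of_le h3 with h4 | h4
  · have hmin : min (f1 σ.length j a) (f1 σ.length j b) = σ.length + 1 := by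
      unfold f1; split_ifs <;> omega
    simp only [hmin]
    exact dB_x σ τ j hj (by omega)
  · have hmin : min (f1 σ.length j a) (f1 σ.length j b) = a := by
      unfold f1; split_ifs <;> omega
    simp only [hmin]
    rw [dB_hi σ τ j hj a (by omega) (by omega) (by omega),
      ← dA_hi σ τ j a (by omega) ha' (by omega)]
    exact hd

/-- core reverse transfer lemma for `f2` -/
lemma core2rev (σ τ : List Bool) (j : ℕ) (hj : 3 ≤ j) (a b : ℕ) (hab : a < b)
    (hb : b < σ.length + j + 2 + τ.length) (ha' : a < (LB σ τ j).length)
    (hd : (LB σ τ j)[a] = true)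
    (hne : ¬(a = σ.length + j ∧ b = σ.length + j + 1))
    (hh : min (f2 σ.length j a) (f2 σ.length j b) < (LA σ τ j).length) :
    (LA σ τ j)[min (f2 σ.length j a) (f2 σ.length j b)] = true := by
  have hA := lenA σ τ j
  have hB := lenB σ τ j hj
  rcases Nat.lt_or_ge a σ.length with h1 | h1
  · have hmin : min (f2 σ.length j a) (f2 σ.length j b) = a := by
      unfold f2; split_ifs <;> omega
    simp only [hmin]
    rw [dA_lo σ τ j a h1 (by omega), ← dB_lo σ τ j hj a h1 ha']
    exact hd
  rcases Nat.eq_or_lt_of_le h1 with h2 | h2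
  · subst h2
    rw [dB_s σ τ j hj (by omega)] at hd; cases hd
  rcases Nat.eq_or_lt_of_le h2 with h3 | h3
  · -- a = s + 1
    have hmin : min (f2 σ.length j a) (f2 σ.length j b) = σ.length := by
      unfold f2; split_ifs <;> omega
    simp only [hmin]
    exact dA_s σ τ j (by omega)
  rcases Nat.lt_or_ge a (σ.length + j) with h4 | h4
  · rw [dB_mid σ τ j hj a (by omega) h4 ha'] at hd; cases hd
  rcases Nat.eq_or_lt_of_le h4 with h5 | h5
  · -- a = s + j
    have hbne : b ≠ σ.length + j + 1 := fun hb' => hne ⟨h5.symm, hb'⟩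
    have hmin : min (f2 σ.length j a) (f2 σ.length j b) = σ.length + j + 1 := by
      unfold f2; split_ifs <;> omega
    simp only [hmin]
    exact dA_y σ τ j (by omega)
  rcases Nat.eq_or_lt_of_le h5 with h6 | h6
  · -- a = s + j + 1
    subst h6
    simp only [Nat.succ_eq_add_one] at hd
    rw [dB_w σ τ j hj (by omega)] at hd; cases hd
  · have hmin : min (f2 σ.length j a) (f2 σ.length j b) = a := by
      unfold f2; split_ifs <;> omega
    simp only [hmin]
    rw [dA_hi σ τ j a (by omega) (by omega) (by omega),
      ← dB_hi σ τ j hj a (by omega) ha' (by omega)]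
    exact hd
-- PART 3: Fin-level edges
variable (σ τ : List Bool) (j : ℕ) in
def mkA (i : ℕ) (h : i < σ.length + j + 2 + τ.length) : Fin (LA σ τ j).length :=
  ⟨i, by rw [lenA]; exact h⟩

variable (σ τ : List Bool) (j : ℕ) in
def mkB (hj : 3 ≤ j) (i : ℕ) (h : i < σ.length + j + 2 + τ.length) : Fin (LB σ τ j).length :=
  ⟨i, by rw [lenB σ τ j hj]; exact h⟩

lemma ψ1_val (σ τ : List Bool) (j : ℕ) (hj : 3 ≤ j) (u : Fin (LA σ τ j).length) :
    (ψ1 σ τ j hj u).val = f1 σ.length j u.val := rfl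

lemma ψ2_val (σ τ : List Bool) (j : ℕ) (hj : 3 ≤ j) (u : Fin (LA σ τ j).length) :
    (ψ2 σ τ j hj u).val = f2 σ.length j u.val := rfl

lemma ψ2'_val (σ τ : List Bool) (j : ℕ) (hj : 3 ≤ j) (u : Fin (LB σ τ j).length) :
    (ψ2' σ τ j hj u).val = f2 σ.length j u.val := rfl

/-- the special edge `{s, s+1}` of `G = T(A)` -/
def e0 (σ τ : List Bool) (j : ℕ) : Sym2 (Fin (LA σ τ j).length) :=
  s(mkA σ τ j σ.length (by omega), mkA σ τ j (σ.length + 1) (by omega))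

/-- the special edge `{s+j, s+j+1}` of `G' = T(B)` -/
def f0 (σ τ : List Bool) (j : ℕ) (hj : 3 ≤ j) : Sym2 (Fin (LB σ τ j).length) :=
  s(mkB σ τ j hj (σ.length + j) (by omega), mkB σ τ j hj (σ.length + j + 1) (by omega))

lemma e0_edge (σ τ : List Bool) (j : ℕ) : e0 σ τ j ∈ (threshOf (LA σ τ j)).edgeSet := by
  rw [e0, SimpleGraph.mem_edgeSet]
  apply thresh_adj_of _ _ _ (by simp [mkA]) (by simp [mkA, lenA]; omega)
  have hmin : min (mkA σ τ j σ.length (by omega)).val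
      (mkA σ τ j (σ.length + 1) (by omega)).val = σ.length := by simp [mkA]
  simp only [hmin]
  exact dA_s σ τ j (by rw [lenA]; omega)

lemma f0_edge (σ τ : List Bool) (j : ℕ) (hj : 3 ≤ j) :
    f0 σ τ j hj ∈ (threshOf (LB σ τ j)).edgeSet := by
  rw [f0, SimpleGraph.mem_edgeSet]
  apply thresh_adj_of _ _ _ (by simp [mkB]) (by simp [mkB, lenB σ τ j hj]; omega)
  have hmin : min (mkB σ τ j hj (σ.length + j) (by omega)).val
      (mkB σ τ j hj (σ.length + j + 1) (by omega)).val = σ.length + j := by simp [mkB]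
  simp only [hmin]
  exact dB_y σ τ j hj (by rw [lenB σ τ j hj]; omega)

/-- pairs with first coordinate a middle zero of `A` are not edges of `G` -/
lemma notEdgeA (σ τ : List Bool) (j : ℕ) (a b : ℕ) (h1 : σ.length < a) (h2 : a ≤ σ.length + j)
    (hab : a < b) (ha : a < (LA σ τ j).length) (hb : b < (LA σ τ j).length) :
    ¬ (threshOf (LA σ τ j)).Adj ⟨a, ha⟩ ⟨b, hb⟩ := by
  intro h
  obtain ⟨hne', hw, hd⟩ := thresh_adj_elim _ _ _ h
  have hmin : min (⟨a, ha⟩ : Fin (LA σ τ j).length).val (⟨b, hb⟩ : Fin _).val = a := by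
    simp; omega
  simp only [hmin] at hd
  rw [dA_mid σ τ j a h1 h2 ha] at hd
  cases hd

/-- Fin-level transfer: ψ2 works for any `A`-edge except `e0` -/
lemma adj_map2 (σ τ : List Bool) (j : ℕ) (hj : 3 ≤ j) (u v : Fin (LA σ τ j).length)
    (h : (threshOf (LA σ τ j)).Adj u v)
    (hne : ¬(u.val = σ.length ∧ v.val = σ.length + 1))
    (hne' : ¬(v.val = σ.length ∧ u.val = σ.length + 1)) :
    (threshOf (LB σ τ j)).Adj (ψ2 σ τ j hj u) (ψ2 σ τ j hj v) := by
  obtain ⟨hnuv, hw, hd⟩ := thresh_adj_elim _ _ _ h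
  have hA := lenA σ τ j
  apply thresh_adj_of _ _ _
    (fun hval => hnuv (by
      have := congrArg (f2 σ.length j) hval
      rwa [ψ2_val, ψ2_val, f2_invol _ _ hj, f2_invol _ _ hj] at this))
    (Nat.lt_of_le_of_lt (Nat.min_le_left _ _) (ψ2 σ τ j hj u).isLt)
  simp only [ψ2_val]
  rcases Nat.lt_or_ge u.val v.val with hlt | hge
  · simp only [Nat.min_eq_left (Nat.le_of_lt hlt)] at hd
    exact core2 σ τ j hj u.val v.val hlt (by have := v.isLt; omega) u.isLt hd hne
      (Nat.lt_of_le_of_lt (Nat.min_le_left _ _) (ψ2 σ τ j hj u).isLt)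
  · have hlt : v.val < u.val := by omega
    simp only [Nat.min_eq_right (Nat.le_of_lt hlt)] at hd
    simp only [Nat.min_comm (f2 σ.length j u.val) (f2 σ.length j v.val)]
    exact core2 σ τ j hj v.val u.val hlt (by have := u.isLt; omega) v.isLt hd hne'
      (Nat.lt_of_le_of_lt (Nat.min_le_left _ _) (ψ2 σ τ j hj v).isLt)

/-- Fin-level transfer: ψ1 works for any `A`-edge avoiding vertex `s` -/
lemma adj_map1 (σ τ : List Bool) (j : ℕ) (hj : 3 ≤ j) (u v : Fin (LA σ τ j).length)
    (h : (threshOf (LA σ τ j)).Adj u v)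
    (hnu : u.val ≠ σ.length) (hnv : v.val ≠ σ.length) :
    (threshOf (LB σ τ j)).Adj (ψ1 σ τ j hj u) (ψ1 σ τ j hj v) := by
  obtain ⟨hnuv, hw, hd⟩ := thresh_adj_elim _ _ _ h
  have hA := lenA σ τ j
  apply thresh_adj_of _ _ _
    (fun hval => hnuv (by
      have := congrArg (f1 σ.length j) hval
      rwa [ψ1_val, ψ1_val, f1_invol _ _ hj, f1_invol _ _ hj] at this))
    (Nat.lt_of_le_of_lt (Nat.min_le_left _ _) (ψ1 σ τ j hj u).isLt)
  simp only [ψ1_val]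
  rcases Nat.lt_or_ge u.val v.val with hlt | hge
  · simp only [Nat.min_eq_left (Nat.le_of_lt hlt)] at hd
    exact core1 σ τ j hj u.val v.val hlt (by have := v.isLt; omega) u.isLt hd hnu hnv
      (Nat.lt_of_le_of_lt (Nat.min_le_left _ _) (ψ1 σ τ j hj u).isLt)
  · have hlt : v.val < u.val := by omega
    simp only [Nat.min_eq_right (Nat.le_of_lt hlt)] at hd
    simp only [Nat.min_comm (f1 σ.length j u.val) (f1 σ.length j v.val)]
    exact core1 σ τ j hj v.val u.val hlt (by have := u.isLt; omega) v.isLt hd hnv hnu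
      (Nat.lt_of_le_of_lt (Nat.min_le_left _ _) (ψ1 σ τ j hj v).isLt)

/-- Fin-level reverse transfer: ψ2' works for any `B`-edge except `f0` -/
lemma adj_map2rev (σ τ : List Bool) (j : ℕ) (hj : 3 ≤ j) (u v : Fin (LB σ τ j).length)
    (h : (threshOf (LB σ τ j)).Adj u v)
    (hne : ¬(u.val = σ.length + j ∧ v.val = σ.length + j + 1))
    (hne' : ¬(v.val = σ.length + j ∧ u.val = σ.length + j + 1)) :
    (threshOf (LA σ τ j)).Adj (ψ2' σ τ j hj u) (ψ2' σ τ j hj v) := by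
  obtain ⟨hnuv, hw, hd⟩ := thresh_adj_elim _ _ _ h
  have hB := lenB σ τ j hj
  apply thresh_adj_of _ _ _
    (fun hval => hnuv (by
      have := congrArg (f2 σ.length j) hval
      rwa [ψ2'_val, ψ2'_val, f2_invol _ _ hj, f2_invol _ _ hj] at this))
    (Nat.lt_of_le_of_lt (Nat.min_le_left _ _) (ψ2' σ τ j hj u).isLt)
  simp only [ψ2'_val]
  rcases Nat.lt_or_ge u.val v.val with hlt | hge
  · simp only [Nat.min_eq_left (Nat.le_of_lt hlt)] at hd
    exact core2rev σ τ j hj u.val v.val hlt (by have := v.isLt; omega) u.isLt hd hne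
      (Nat.lt_of_le_of_lt (Nat.min_le_left _ _) (ψ2' σ τ j hj u).isLt)
  · have hlt : v.val < u.val := by omega
    simp only [Nat.min_eq_right (Nat.le_of_lt hlt)] at hd
    simp only [Nat.min_comm (f2 σ.length j u.val) (f2 σ.length j v.val)]
    exact core2rev σ τ j hj v.val u.val hlt (by have := u.isLt; omega) v.isLt hd hne'
      (Nat.lt_of_le_of_lt (Nat.min_le_left _ _) (ψ2' σ τ j hj v).isLt)
-- PART 4: matchings
lemma pair_map {V W : Type*} (ψ : V → W) (hψ : Function.Injective ψ)
    (emb : Sym2 V ↪ Sym2 W) (hemb : ∀ e, emb e = Sym2.map ψ e)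
    (M : Finset (Sym2 V))
    (hM : ∀ e ∈ M, ∀ f ∈ M, e ≠ f → ∀ v, v ∈ e → v ∉ f) :
    ∀ e ∈ M.map emb, ∀ f ∈ M.map emb, e ≠ f → ∀ w, w ∈ e → w ∉ f := by
  intro e' he' f' hf' hnef w hwe hwf
  rw [Finset.mem_map] at he' hf'
  obtain ⟨e, heM, rfl⟩ := he'
  obtain ⟨f, hfM, rfl⟩ := hf'
  simp only [hemb] at hwe hwf hnef
  rw [Sym2.mem_map] at hwe hwf
  obtain ⟨a, hae, rfl⟩ := hwe
  obtain ⟨b, hbf, hba⟩ := hwf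
  have hab : a = b := hψ hba.symm
  subst hab
  exact hM e heM f hfM (fun h => hnef (by rw [h])) a hae hbf

variable (σ τ : List Bool) (j : ℕ) in
def emb1 (hj : 3 ≤ j) : Sym2 (Fin (LA σ τ j).length) ↪ Sym2 (Fin (LB σ τ j).length) :=
  ⟨Sym2.map (ψ1 σ τ j hj), Sym2.map.injective (ψ1_inj σ τ j hj)⟩

variable (σ τ : List Bool) (j : ℕ) in
def emb2 (hj : 3 ≤ j) : Sym2 (Fin (LA σ τ j).length) ↪ Sym2 (Fin (LB σ τ j).length) :=
  ⟨Sym2.map (ψ2 σ τ j hj), Sym2.map.injective (ψ2_inj σ τ j hj)⟩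

-- value computations
lemma f1_at_s (s : ℕ) (hj : 3 ≤ j) : f1 s j s = s + j := by unfold f1; split_ifs <;> omega
lemma f1_at_s1 (s : ℕ) (hj : 3 ≤ j) : f1 s j (s+1) = s + j + 1 := by unfold f1; split_ifs <;> omega
lemma f1_at_s2 (s : ℕ) (hj : 3 ≤ j) : f1 s j (s+2) = s + 2 := by unfold f1; split_ifs <;> omega
lemma f1_at_y (s : ℕ) (hj : 3 ≤ j) : f1 s j (s+j+1) = s + 1 := by unfold f1; split_ifs <;> omega
lemma f2_at_s (s : ℕ) (hj : 3 ≤ j) : f2 s j s = s + 1 := by unfold f2; split_ifs <;> omega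
lemma f2_at_s1 (s : ℕ) (hj : 3 ≤ j) : f2 s j (s+1) = s := by unfold f2; split_ifs <;> omega
lemma f2_at_sj (s : ℕ) (hj : 3 ≤ j) : f2 s j (s+j) = s + j + 1 := by unfold f2; split_ifs <;> omega
lemma f2_at_y (s : ℕ) (hj : 3 ≤ j) : f2 s j (s+j+1) = s + j := by unfold f2; split_ifs <;> omega

lemma c1 (σ τ : List Bool) (j : ℕ) (hj : 3 ≤ j) :
    Sym2.map (ψ1 σ τ j hj) (e0 σ τ j) = f0 σ τ j hj := by
  rw [e0, f0, Sym2.map_pair_eq, Sym2.eq_iff]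
  left
  exact ⟨Fin.ext (f1_at_s j σ.length hj), Fin.ext (f1_at_s1 j σ.length hj)⟩

lemma c2 (σ τ : List Bool) (j : ℕ) (hj : 3 ≤ j) :
    Sym2.map (ψ2 σ τ j hj)
      s(mkA σ τ j (σ.length + j) (by omega), mkA σ τ j (σ.length + j + 1) (by omega)) =
    f0 σ τ j hj := by
  rw [f0, Sym2.map_pair_eq, Sym2.eq_iff]
  right
  exact ⟨Fin.ext (f2_at_sj j σ.length hj), Fin.ext (f2_at_y j σ.length hj)⟩

lemma c3 (σ τ : List Bool) (j : ℕ) (hj : 3 ≤ j) :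
    Sym2.map (ψ1 σ τ j hj)
      s(mkA σ τ j (σ.length + j + 1) (by omega), mkA σ τ j (σ.length + 2) (by omega)) =
    s(mkB σ τ j hj (σ.length + 1) (by omega), mkB σ τ j hj (σ.length + 2) (by omega)) := by
  rw [Sym2.map_pair_eq, Sym2.eq_iff]
  left
  exact ⟨Fin.ext (f1_at_y j σ.length hj), Fin.ext (f1_at_s2 j σ.length hj)⟩

lemma c4 (σ τ : List Bool) (j : ℕ) (hj : 3 ≤ j) :
    Sym2.map (ψ2 σ τ j hj) (e0 σ τ j) =
    s(mkB σ τ j hj (σ.length + 1) (by omega), mkB σ τ j hj σ.length (by omega)) := by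
  rw [e0, Sym2.map_pair_eq, Sym2.eq_iff]
  left
  exact ⟨Fin.ext (f2_at_s j σ.length hj), Fin.ext (f2_at_s1 j σ.length hj)⟩

lemma notEdgeA' (σ τ : List Bool) (j : ℕ) (hj : 3 ≤ j) :
    s(mkA σ τ j (σ.length + j) (by omega), mkA σ τ j (σ.length + j + 1) (by omega)) ∉
      (threshOf (LA σ τ j)).edgeSet := by
  rw [SimpleGraph.mem_edgeSet]
  exact notEdgeA σ τ j (σ.length + j) (σ.length + j + 1) (by omega) (by omega) (by omega) _ _

lemma notEdgeA'' (σ τ : List Bool) (j : ℕ) (hj : 3 ≤ j) :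
    s(mkA σ τ j (σ.length + 2) (by omega), mkA σ τ j (σ.length + j + 1) (by omega)) ∉
      (threshOf (LA σ τ j)).edgeSet := by
  rw [SimpleGraph.mem_edgeSet]
  exact notEdgeA σ τ j (σ.length + 2) (σ.length + j + 1) (by omega) (by omega) (by omega) _ _

lemma notEdgeB (σ τ : List Bool) (j : ℕ) (hj : 3 ≤ j) :
    s(mkB σ τ j hj (σ.length + 1) (by omega), mkB σ τ j hj σ.length (by omega)) ∉
      (threshOf (LB σ τ j)).edgeSet := by
  rw [SimpleGraph.mem_edgeSet]
  intro h
  obtain ⟨hnuv, hw, hd⟩ := thresh_adj_elim _ _ _ h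
  have hmin : min (mkB σ τ j hj (σ.length + 1) (by omega)).val
      (mkB σ τ j hj σ.length (by omega)).val = σ.length := by simp [mkB]
  simp only [hmin] at hd
  rw [dB_s σ τ j hj (by rw [lenB σ τ j hj]; omega)] at hd
  cases hd

lemma matching_map2 (σ τ : List Bool) (j : ℕ) (hj : 3 ≤ j)
    (M : Finset (Sym2 (Fin (LA σ τ j).length)))
    (hM : IsMatchingSet (threshOf (LA σ τ j)) M) (he0 : e0 σ τ j ∉ M) :
    IsMatchingSet (threshOf (LB σ τ j)) (M.map (emb2 σ τ j hj)) := by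
  constructor
  · intro e' he'
    rw [Finset.mem_map] at he'
    obtain ⟨e, heM, rfl⟩ := he'
    have heE := hM.1 e heM
    have hnee : e ≠ e0 σ τ j := fun h => he0 (h ▸ heM)
    revert heE hnee
    induction e using Sym2.ind with
    | _ u v =>
      intro heE hnee
      show Sym2.map (ψ2 σ τ j hj) s(u, v) ∈ _
      rw [Sym2.map_pair_eq, SimpleGraph.mem_edgeSet]
      rw [SimpleGraph.mem_edgeSet] at heE
      refine adj_map2 σ τ j hj u v heE ?_ ?_
      · rintro ⟨h1, h2⟩
        exact hnee (by rw [e0, Sym2.eq_iff]; left; exact ⟨Fin.ext h1, Fin.ext h2⟩)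
      · rintro ⟨h1, h2⟩
        exact hnee (by rw [e0, Sym2.eq_iff]; right; exact ⟨Fin.ext h2, Fin.ext h1⟩)
  · exact pair_map _ (ψ2_inj σ τ j hj) _ (fun e => rfl) M hM.2

lemma matching_map1 (σ τ : List Bool) (j : ℕ) (hj : 3 ≤ j)
    (M : Finset (Sym2 (Fin (LA σ τ j).length)))
    (hM : IsMatchingSet (threshOf (LA σ τ j)) M) (he0 : e0 σ τ j ∈ M) :
    IsMatchingSet (threshOf (LB σ τ j)) (M.map (emb1 σ τ j hj)) := by
  constructor
  · intro e' he'
    rw [Finset.mem_map] at he'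
    obtain ⟨e, heM, rfl⟩ := he'
    have heE := hM.1 e heM
    show Sym2.map (ψ1 σ τ j hj) e ∈ _
    by_cases hee : e = e0 σ τ j
    · subst hee
      rw [c1 σ τ j hj]
      exact f0_edge σ τ j hj
    · have hxnotin : mkA σ τ j σ.length (by omega) ∉ e :=
        hM.2 _ he0 e heM (fun h => hee h.symm) _ (Sym2.mem_mk_left _ _)
      revert heE hxnotin
      induction e using Sym2.ind with
      | _ u v =>
        intro heE hxnotin
        rw [Sym2.map_pair_eq, SimpleGraph.mem_edgeSet]
        rw [SimpleGraph.mem_edgeSet] at heE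
        refine adj_map1 σ τ j hj u v heE ?_ ?_
        · intro h1
          have hu : u = mkA σ τ j σ.length (by omega) := Fin.ext h1
          exact hxnotin (by rw [← hu]; exact Sym2.mem_mk_left _ _)
        · intro h1
          have hv : v = mkA σ τ j σ.length (by omega) := Fin.ext h1
          exact hxnotin (by rw [← hv]; exact Sym2.mem_mk_right _ _)
  · exact pair_map _ (ψ1_inj σ τ j hj) _ (fun e => rfl) M hM.2
-- PART 5: Phi and counting
open Classical in
noncomputable def Phi (σ τ : List Bool) (j : ℕ) (hj : 3 ≤ j) :
    {M : Finset (Sym2 (Fin (LA σ τ j).length)) // IsMatchingSet (threshOf (LA σ τ j)) M} →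
    {M : Finset (Sym2 (Fin (LB σ τ j).length)) // IsMatchingSet (threshOf (LB σ τ j)) M} :=
  fun p =>
    if he : e0 σ τ j ∈ p.val then
      ⟨p.val.map (emb1 σ τ j hj), matching_map1 σ τ j hj p.val p.2 he⟩
    else
      ⟨p.val.map (emb2 σ τ j hj), matching_map2 σ τ j hj p.val p.2 he⟩

lemma Phi_card (σ τ : List Bool) (j : ℕ) (hj : 3 ≤ j) (p) :
    (Phi σ τ j hj p).val.card = p.val.card := by
  unfold Phi
  split_ifs <;> exact Finset.card_map _

lemma f0_elim2 (σ τ : List Bool) (j : ℕ) (hj : 3 ≤ j)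
    (M : Finset (Sym2 (Fin (LA σ τ j).length)))
    (hM : IsMatchingSet (threshOf (LA σ τ j)) M)
    (h : f0 σ τ j hj ∈ M.map (emb2 σ τ j hj)) : False := by
  rw [Finset.mem_map] at h
  obtain ⟨f, hfM, hf⟩ := h
  have hspec : emb2 σ τ j hj
      s(mkA σ τ j (σ.length + j) (by omega), mkA σ τ j (σ.length + j + 1) (by omega)) =
      f0 σ τ j hj := c2 σ τ j hj
  have : f = s(mkA σ τ j (σ.length + j) (by omega), mkA σ τ j (σ.length + j + 1) (by omega)) :=
    (emb2 σ τ j hj).injective (hf.trans hspec.symm)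
  exact notEdgeA' σ τ j hj (this ▸ hM.1 f hfM)

lemma Phi_inj (σ τ : List Bool) (j : ℕ) (hj : 3 ≤ j) :
    Function.Injective (Phi σ τ j hj) := by
  intro p q h
  have hval := congrArg Subtype.val h
  unfold Phi at hval
  split_ifs at hval with h1 h2 h2 <;> dsimp only at hval
  · exact Subtype.ext (Finset.map_injective _ hval)
  · exfalso
    have hmem : f0 σ τ j hj ∈ p.val.map (emb1 σ τ j hj) := by
      rw [Finset.mem_map]
      exact ⟨e0 σ τ j, h1, c1 σ τ j hj⟩
    rw [hval] at hmem
    exact f0_elim2 σ τ j hj q.val q.2 hmem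
  · exfalso
    have hmem : f0 σ τ j hj ∈ q.val.map (emb1 σ τ j hj) := by
      rw [Finset.mem_map]
      exact ⟨e0 σ τ j, h2, c1 σ τ j hj⟩
    rw [← hval] at hmem
    exact f0_elim2 σ τ j hj p.val p.2 hmem
  · exact Subtype.ext (Finset.map_injective _ hval)

open Classical in
noncomputable def Mw (σ τ : List Bool) (j : ℕ) (hj : 3 ≤ j) :
    Finset (Sym2 (Fin (LB σ τ j).length)) :=
  {s(mkB σ τ j hj (σ.length + 1) (by omega), mkB σ τ j hj (σ.length + 2) (by omega)),
    f0 σ τ j hj}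

lemma E1_edge (σ τ : List Bool) (j : ℕ) (hj : 3 ≤ j) :
    s(mkB σ τ j hj (σ.length + 1) (by omega), mkB σ τ j hj (σ.length + 2) (by omega)) ∈
      (threshOf (LB σ τ j)).edgeSet := by
  rw [SimpleGraph.mem_edgeSet]
  apply thresh_adj_of _ _ _ (by simp [mkB]) (by simp [mkB, lenB σ τ j hj]; omega)
  have hmin : min (mkB σ τ j hj (σ.length + 1) (by omega)).val
      (mkB σ τ j hj (σ.length + 2) (by omega)).val = σ.length + 1 := by simp [mkB]
  simp only [hmin]
  exact dB_x σ τ j hj (by rw [lenB σ τ j hj]; omega)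

lemma Mw_matching (σ τ : List Bool) (j : ℕ) (hj : 3 ≤ j) :
    IsMatchingSet (threshOf (LB σ τ j)) (Mw σ τ j hj) := by
  constructor
  · intro e he
    rw [Mw, Finset.mem_insert, Finset.mem_singleton] at he
    rcases he with he | he
    · rw [he]; exact E1_edge σ τ j hj
    · rw [he]; exact f0_edge σ τ j hj
  · intro e he f hf hnef w hwe hwf
    rw [Mw, Finset.mem_insert, Finset.mem_singleton] at he hf
    have key : ∀ w' : Fin (LB σ τ j).length,
        w' ∈ s(mkB σ τ j hj (σ.length + 1) (by omega), mkB σ τ j hj (σ.length + 2) (by omega)) →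
        w' ∈ f0 σ τ j hj → False := by
      intro w' h1 h2
      rw [f0] at h2
      rw [Sym2.mem_iff] at h1 h2
      have v1 : w'.val = σ.length + 1 ∨ w'.val = σ.length + 2 := by
        rcases h1 with h | h <;> [left; right] <;> exact congrArg Fin.val h
      have v2 : w'.val = σ.length + j ∨ w'.val = σ.length + j + 1 := by
        rcases h2 with h | h <;> [left; right] <;> exact congrArg Fin.val h
      omega
    rcases he with he | he <;> rcases hf with hf | hf
    · exact hnef (he.trans hf.symm) |>.elim
    · exact key w (he ▸ hwe) (hf ▸ hwf)
    · exact key w (hf ▸ hwf) (he ▸ hwe)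
    · exact hnef (he.trans hf.symm) |>.elim

lemma Mw_not_range (σ τ : List Bool) (j : ℕ) (hj : 3 ≤ j) (p) :
    (Phi σ τ j hj p).val ≠ Mw σ τ j hj := by
  intro h
  unfold Phi at h
  split_ifs at h with h1 <;> dsimp only at h
  · -- branch 1 : E1 has no preimage
    have hmem : s(mkB σ τ j hj (σ.length + 1) (by omega), mkB σ τ j hj (σ.length + 2) (by omega))
        ∈ p.val.map (emb1 σ τ j hj) := by
      rw [h, Mw]; exact Finset.mem_insert_self _ _
    rw [Finset.mem_map] at hmem
    obtain ⟨f, hfM, hf⟩ := hmem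
    have hspec : emb1 σ τ j hj
        s(mkA σ τ j (σ.length + j + 1) (by omega), mkA σ τ j (σ.length + 2) (by omega)) =
        s(mkB σ τ j hj (σ.length + 1) (by omega), mkB σ τ j hj (σ.length + 2) (by omega)) :=
      c3 σ τ j hj
    have hfe : f = s(mkA σ τ j (σ.length + j + 1) (by omega), mkA σ τ j (σ.length + 2) (by omega)) :=
      (emb1 σ τ j hj).injective (hf.trans hspec.symm)
    have hedge := p.2.1 f hfM
    rw [hfe, Sym2.eq_swap] at hedge
    exact notEdgeA'' σ τ j hj hedge
  · -- branch 2 : f0 has no preimage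
    have hmem : f0 σ τ j hj ∈ p.val.map (emb2 σ τ j hj) := by
      rw [h, Mw]
      exact Finset.mem_insert_of_mem (Finset.mem_singleton_self _)
    exact f0_elim2 σ τ j hj p.val p.2 hmem

lemma match_lt (σ τ : List Bool) (j : ℕ) (hj : 3 ≤ j) :
    matchCount (threshOf (LA σ τ j)) < matchCount (threshOf (LB σ τ j)) := by
  classical
  rw [matchCount, matchCount]
  haveI : Fintype {M : Finset (Sym2 (Fin (LA σ τ j).length)) //
      IsMatchingSet (threshOf (LA σ τ j)) M} := Fintype.ofFinite _
  haveI : Fintype {M : Finset (Sym2 (Fin (LB σ τ j).length)) //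
      IsMatchingSet (threshOf (LB σ τ j)) M} := Fintype.ofFinite _
  rw [Nat.card_eq_fintype_card, Nat.card_eq_fintype_card]
  refine Fintype.card_lt_of_injective_of_notMem (Phi σ τ j hj) (Phi_inj σ τ j hj)
    (b := ⟨Mw σ τ j hj, Mw_matching σ τ j hj⟩) ?_
  rintro ⟨p, hp⟩
  exact Mw_not_range σ τ j hj p (congrArg Subtype.val hp)

lemma matchK_le (σ τ : List Bool) (j : ℕ) (hj : 3 ≤ j) (k : ℕ) :
    matchCountK (threshOf (LA σ τ j)) k ≤ matchCountK (threshOf (LB σ τ j)) k := by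
  classical
  rw [matchCountK, matchCountK]
  refine Nat.card_le_card_of_injective
    (fun p => ⟨(Phi σ τ j hj ⟨p.1, p.2.1⟩).val, (Phi σ τ j hj ⟨p.1, p.2.1⟩).2,
      by rw [Phi_card]; exact p.2.2⟩) ?_
  intro p q h
  have h1 := congrArg Subtype.val h
  dsimp only at h1
  have h3 := Phi_inj σ τ j hj (Subtype.ext h1)
  have h4 := congrArg Subtype.val h3
  dsimp only at h4
  exact Subtype.ext h4

-- edges
lemma edge_in2 (σ τ : List Bool) (j : ℕ) (hj : 3 ≤ j) (e : Sym2 (Fin (LA σ τ j).length))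
    (he : e ∈ (threshOf (LA σ τ j)).edgeSet) (hne : e ≠ e0 σ τ j) :
    Sym2.map (ψ2 σ τ j hj) e ∈ (threshOf (LB σ τ j)).edgeSet := by
  revert he hne
  induction e using Sym2.ind with
  | _ u v =>
    intro he hne
    rw [Sym2.map_pair_eq, SimpleGraph.mem_edgeSet]
    rw [SimpleGraph.mem_edgeSet] at he
    refine adj_map2 σ τ j hj u v he ?_ ?_
    · rintro ⟨ha, hb⟩
      exact hne (by rw [e0, Sym2.eq_iff]; left; exact ⟨Fin.ext ha, Fin.ext hb⟩)
    · rintro ⟨ha, hb⟩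
      exact hne (by rw [e0, Sym2.eq_iff]; right; exact ⟨Fin.ext hb, Fin.ext ha⟩)

lemma edge_in2rev (σ τ : List Bool) (j : ℕ) (hj : 3 ≤ j) (f : Sym2 (Fin (LB σ τ j).length))
    (hf : f ∈ (threshOf (LB σ τ j)).edgeSet) (hne : f ≠ f0 σ τ j hj) :
    Sym2.map (ψ2' σ τ j hj) f ∈ (threshOf (LA σ τ j)).edgeSet := by
  revert hf hne
  induction f using Sym2.ind with
  | _ u v =>
    intro hf hne
    rw [Sym2.map_pair_eq, SimpleGraph.mem_edgeSet]
    rw [SimpleGraph.mem_edgeSet] at hf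
    refine adj_map2rev σ τ j hj u v hf ?_ ?_
    · rintro ⟨ha, hb⟩
      exact hne (by rw [f0, Sym2.eq_iff]; left; exact ⟨Fin.ext ha, Fin.ext hb⟩)
    · rintro ⟨ha, hb⟩
      exact hne (by rw [f0, Sym2.eq_iff]; right; exact ⟨Fin.ext hb, Fin.ext ha⟩)

lemma edge_eq (σ τ : List Bool) (j : ℕ) (hj : 3 ≤ j) :
    edgeCount (threshOf (LA σ τ j)) = edgeCount (threshOf (LB σ τ j)) := by
  classical
  rw [edgeCount, edgeCount]
  apply Nat.card_congr
  refine Equiv.ofBijective (fun p =>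
    if h : p.val = e0 σ τ j then ⟨f0 σ τ j hj, f0_edge σ τ j hj⟩
    else ⟨Sym2.map (ψ2 σ τ j hj) p.val, edge_in2 σ τ j hj p.val p.2 h⟩) ⟨?_, ?_⟩
  · intro p q h
    dsimp only at h
    split_ifs at h with hp hq hq
    · exact Subtype.ext (hp.trans hq.symm)
    · exfalso
      have hval : f0 σ τ j hj = Sym2.map (ψ2 σ τ j hj) q.val := congrArg Subtype.val h
      have : q.val = s(mkA σ τ j (σ.length + j) (by omega), mkA σ τ j (σ.length + j + 1) (by omega)) :=
        Sym2.map.injective (ψ2_inj σ τ j hj) (hval.symm.trans (c2 σ τ j hj).symm)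
      exact notEdgeA' σ τ j hj (this ▸ q.2)
    · exfalso
      have hval : Sym2.map (ψ2 σ τ j hj) p.val = f0 σ τ j hj := congrArg Subtype.val h
      have : p.val = s(mkA σ τ j (σ.length + j) (by omega), mkA σ τ j (σ.length + j + 1) (by omega)) :=
        Sym2.map.injective (ψ2_inj σ τ j hj) (hval.trans (c2 σ τ j hj).symm)
      exact notEdgeA' σ τ j hj (this ▸ p.2)
    · have hval : Sym2.map (ψ2 σ τ j hj) p.val = Sym2.map (ψ2 σ τ j hj) q.val :=
        congrArg Subtype.val h
      exact Subtype.ext (Sym2.map.injective (ψ2_inj σ τ j hj) hval)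
  · rintro ⟨f, hf⟩
    have hid : (ψ2 σ τ j hj) ∘ (ψ2' σ τ j hj) = id :=
      funext fun u => Fin.ext (f2_invol _ _ hj u.val)
    by_cases hf0 : f = f0 σ τ j hj
    · refine ⟨⟨e0 σ τ j, e0_edge σ τ j⟩, ?_⟩
      dsimp only
      rw [dif_pos rfl]
      exact Subtype.ext hf0.symm
    · refine ⟨⟨Sym2.map (ψ2' σ τ j hj) f, edge_in2rev σ τ j hj f hf hf0⟩, ?_⟩
      have hcomp : Sym2.map (ψ2 σ τ j hj) (Sym2.map (ψ2' σ τ j hj) f) = f := by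
        rw [Sym2.map_map, hid, Sym2.map_id]
        rfl
      have hne0 : Sym2.map (ψ2' σ τ j hj) f ≠ e0 σ τ j := by
        intro hE
        have hfeq : f = Sym2.map (ψ2 σ τ j hj) (e0 σ τ j) := by rw [← hcomp, hE]
        rw [c4 σ τ j hj] at hfeq
        exact notEdgeB σ τ j hj (hfeq ▸ hf)
      dsimp only
      rw [dif_neg hne0]
      exact Subtype.ext hcomp

end Rm14

/-- For binary strings `σ, τ` and `j ≥ 3`, the threshold graphs
`G = T(σ 1 0^j 1 τ)` and `G' = T(σ 0 1 0^{j−2} 1 0 τ)` have the same number of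
vertices and edges, `m(G) < m(G')`, and `m_k(G) ≤ m_k(G')` for every `k`. -/
theorem remove_bracketed_zero_string (σ τ : List Bool) (j : ℕ) (hj : 3 ≤ j) :
    (σ ++ [true] ++ List.replicate j false ++ [true] ++ τ).length =
        (σ ++ [false, true] ++ List.replicate (j - 2) false ++ [true, false] ++ τ).length ∧
      edgeCount (threshOf (σ ++ [true] ++ List.replicate j false ++ [true] ++ τ)) =
        edgeCount (threshOf (σ ++ [false, true] ++ List.replicate (j - 2) false ++ [true, false] ++ τ)) ∧
      matchCount (threshOf (σ ++ [true] ++ List.replicate j false ++ [true] ++ τ)) <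
        matchCount (threshOf (σ ++ [false, true] ++ List.replicate (j - 2) false ++ [true, false] ++ τ)) ∧
      ∀ k : ℕ,
        matchCountK (threshOf (σ ++ [true] ++ List.replicate j false ++ [true] ++ τ)) k ≤
          matchCountK (threshOf (σ ++ [false, true] ++ List.replicate (j - 2) false ++ [true, false] ++ τ)) k :=
  ⟨(Rm14.lenA σ τ j).trans (Rm14.lenB σ τ j hj).symm, Rm14.edge_eq σ τ j hj,
    Rm14.match_lt σ τ j hj, fun k => Rm14.matchK_le σ τ j hj k⟩
end

section
/- Let σ and ρ be (possibly empty) binary strings and let j ≥ 2. Then the threshold graphs G = T(σ 1 0^j 1 ρ) and G' = T(σ 0 1 0^{j−2} 1 0 ρ) have the same number of vertices and edges, i(G) > i(G'), and i_k(G) ≥ i_k(G') for every k ≥ 0. -/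
/-!
Reading a code from the left, `threshOf (b :: c)` is `threshOf c` together with a new vertex `0`
that is isolated (`b = false`) or dominating (`b = true`). Hence the independence polynomial
`I(c) = ∑ X ^ #S` (over independent sets `S`) satisfies `I(0c) = (1 + X) I(c)` and
`I(1c) = I(c) + X`, while a leading `1` adds `c.length` edges and a leading `0` none.
For `j = i + 2` this gives `I(1 0^j 1 ρ) = I(0 1 0^(j-2) 1 0 ρ) + X^2 ((1 + X)^(j-1) - 1)`, and
prefixing `σ` multiplies the difference by `(1 + X) ^ (σ.count false)`. The difference has
nonnegative coefficients and is nonzero, which gives both inequalities.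
-/

open Finset Polynomial

theorem Fin.sum_univ_finset_succ {M : Type*} [AddCommMonoid M] {n : ℕ}
    (f : Finset (Fin (n + 1)) → M) :
    ∑ S, f S = ∑ T : Finset (Fin n), f (T.map (Fin.succEmb n)) +
      ∑ T : Finset (Fin n), f (insert 0 (T.map (Fin.succEmb n))) := by
  classical
  have h0 : (0 : Fin (n + 1)) ∉ univ.map (Fin.succEmb n) := by simp
  have huniv : (univ : Finset (Fin (n + 1))) = insert 0 (univ.map (Fin.succEmb n)) := by
    ext i
    cases i using Fin.cases <;> simp
  have hinj : Set.InjOn (image (Fin.succEmb n)) ↑(univ : Finset (Fin n)).powerset :=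
    (image_injective (Fin.succEmb n).injective).injOn
  rw [← powerset_univ, huniv, sum_powerset_insert h0]
  simp_rw [map_eq_image]
  rw [powerset_image, sum_image hinj, sum_image hinj, powerset_univ]

@[simp]
theorem threshOf_cons_adj_succ_succ (b : Bool) (c : List Bool) (i j : Fin c.length) :
    (threshOf (b :: c)).Adj i.succ j.succ ↔ (threshOf c).Adj i j := by
  simp [threshOf, Fin.succ_inj]

@[simp]
theorem threshOf_cons_adj_zero_succ (b : Bool) (c : List Bool) (j : Fin c.length) :
    (threshOf (b :: c)).Adj 0 j.succ ↔ b = true := by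
  simp [threshOf, (Fin.succ_ne_zero j).symm]

namespace SimpleGraph

variable {V : Type*} [Fintype V]

open Classical in
noncomputable def indepPoly (G : SimpleGraph V) : ℕ[X] :=
  ∑ S : Finset V, if ∀ u ∈ S, ∀ v ∈ S, ¬ G.Adj u v then X ^ S.card else 0

theorem coeff_indepPoly (G : SimpleGraph V) (k : ℕ) : G.indepPoly.coeff k = indCountK G k := by
  classical
  rw [indCountK, Nat.card_eq_fintype_card, Fintype.card_subtype, card_filter, indepPoly,
    finsetSum_coeff]
  simp only [apply_ite (coeff · k), coeff_X_pow, coeff_zero, ite_and, eq_comm]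

theorem eval_one_indepPoly (G : SimpleGraph V) : G.indepPoly.eval 1 = indCount G := by
  classical
  rw [indCount, Nat.card_eq_fintype_card, Fintype.card_subtype, card_filter, indepPoly,
    eval_finsetSum]
  simp only [apply_ite (eval 1), eval_pow, eval_X, one_pow, eval_zero]

theorem two_mul_edgeCount (G : SimpleGraph V) [DecidableRel G.Adj] :
    2 * edgeCount G = ∑ v, ∑ u, if G.Adj v u then 1 else 0 := by
  rw [edgeCount, Nat.card_eq_fintype_card, ← edgeFinset_card, ← sum_degrees_eq_twice_card_edges]
  simp only [← card_neighborFinset_eq_degree, neighborFinset_eq_filter, card_filter]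

end SimpleGraph

open SimpleGraph

theorem indepPoly_threshOf_cons (b : Bool) (c : List Bool) :
    (threshOf (b :: c)).indepPoly =
      (threshOf c).indepPoly + X * if b then 1 else (threshOf c).indepPoly := by
  classical
  refine (Fin.sum_univ_finset_succ (n := c.length) _).trans ?_
  -- after `simp` the two sides differ only in their decidability instances
  cases b
  · simp [indepPoly, (threshOf _).adj_comm _ 0, mul_sum, pow_succ, mul_comm]
    congr!
  · simp [indepPoly, (threshOf _).adj_comm _ 0, ← eq_empty_iff_forall_notMem]
    congr!

theorem indepPoly_threshOf_replicate_false_append (n : ℕ) (c : List Bool) :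
    (threshOf (List.replicate n false ++ c)).indepPoly = (1 + X) ^ n * (threshOf c).indepPoly := by
  induction n with
  | zero => simp
  | succ n ih =>
    rw [List.replicate_succ, List.cons_append, indepPoly_threshOf_cons, ih]
    simp only [Bool.false_eq_true, if_false]
    ring

theorem indepPoly_threshOf_append_of_eq_add (σ : List Bool) {c d : List Bool} {R : ℕ[X]}
    (h : (threshOf c).indepPoly = (threshOf d).indepPoly + R) :
    (threshOf (σ ++ c)).indepPoly =
      (threshOf (σ ++ d)).indepPoly + (1 + X) ^ σ.count false * R := by
  induction σ with
  | nil => simpa using h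
  | cons b σ ih =>
    rw [List.cons_append, List.cons_append, indepPoly_threshOf_cons, indepPoly_threshOf_cons, ih]
    cases b <;> simp [pow_succ] <;> ring

/-- The difference `X ^ 3 * ∑ t < i + 1, (X + 1) ^ t` is `X ^ 2 * ((1 + X) ^ (i + 1) - 1)`,
written without subtraction. -/
theorem indepPoly_threshOf_shift_bracket (i : ℕ) (ρ : List Bool) :
    (threshOf (true :: List.replicate (i + 2) false ++ true :: ρ)).indepPoly =
      (threshOf (false :: true :: List.replicate i false ++ true :: false :: ρ)).indepPoly +
        X ^ 3 * ∑ t ∈ range (i + 1), (X + 1) ^ t := by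
  have hgeom := geom_sum_mul_add (X : ℕ[X]) (i + 1)
  simp only [List.cons_append, indepPoly_threshOf_cons, indepPoly_threshOf_replicate_false_append,
    Bool.false_eq_true, if_true, if_false, mul_one]
  generalize (threshOf ρ).indepPoly = P
  calc (1 + X) ^ (i + 2) * (P + X) + X = (X + 1) ^ (i + 1) * ((X + 1) * (P + X)) + X := by ring
    _ = (X + 1) ^ (i + 1) * ((X + 1) * P + X) + (X + 1) * X +
          X ^ 3 * ∑ t ∈ range (i + 1), (X + 1) ^ t := by rw [← hgeom]; ring
    _ = _ := by ring

theorem edgeCount_threshOf_cons (b : Bool) (c : List Bool) :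
    edgeCount (threshOf (b :: c)) = edgeCount (threshOf c) + if b then c.length else 0 := by
  classical
  refine Nat.eq_of_mul_eq_mul_left two_pos ?_
  -- `Fin.sum_univ_succ` needs the vertex type in the form `Fin (c.length + 1)`
  change 2 * edgeCount (V := Fin (c.length + 1)) (threshOf (b :: c)) = _
  rw [mul_add, two_mul_edgeCount, two_mul_edgeCount]
  simp only [Fin.sum_univ_succ]
  cases b
  · simp [(threshOf _).adj_comm _ 0]
  · simp [(threshOf _).adj_comm _ 0, sum_add_distrib]
    ring

theorem edgeCount_threshOf_replicate_false_append (n : ℕ) (c : List Bool) :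
    edgeCount (threshOf (List.replicate n false ++ c)) = edgeCount (threshOf c) := by
  induction n with
  | zero => rfl
  | succ n ih =>
    rw [List.replicate_succ, List.cons_append, edgeCount_threshOf_cons, ih]
    simp

theorem edgeCount_threshOf_append_congr (σ : List Bool) {c d : List Bool}
    (hlen : c.length = d.length) (h : edgeCount (threshOf c) = edgeCount (threshOf d)) :
    edgeCount (threshOf (σ ++ c)) = edgeCount (threshOf (σ ++ d)) := by
  induction σ with
  | nil => exact h
  | cons b σ ih =>
    rw [List.cons_append, List.cons_append, edgeCount_threshOf_cons, edgeCount_threshOf_cons, ih]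
    simp [hlen]

theorem edgeCount_threshOf_shift_bracket (i : ℕ) (ρ : List Bool) :
    edgeCount (threshOf (true :: List.replicate (i + 2) false ++ true :: ρ)) =
      edgeCount (threshOf (false :: true :: List.replicate i false ++ true :: false :: ρ)) := by
  simp only [List.cons_append, edgeCount_threshOf_cons, edgeCount_threshOf_replicate_false_append]
  simp
  omega

/-- For binary strings `σ, ρ` and `j ≥ 2`, the threshold graphs
`G = T(σ 1 0^j 1 ρ)` and `G' = T(σ 0 1 0^{j−2} 1 0 ρ)` have the same number of
vertices and edges, `i(G) > i(G')`, and `i_k(G) ≥ i_k(G')` for every `k`. -/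
theorem consecutive_zeros_indep_sets (σ ρ : List Bool) (j : ℕ) (hj : 2 ≤ j) :
    (σ ++ [true] ++ List.replicate j false ++ [true] ++ ρ).length =
        (σ ++ [false, true] ++ List.replicate (j - 2) false ++ [true, false] ++ ρ).length ∧
      edgeCount (threshOf (σ ++ [true] ++ List.replicate j false ++ [true] ++ ρ)) =
        edgeCount (threshOf (σ ++ [false, true] ++ List.replicate (j - 2) false ++ [true, false] ++ ρ)) ∧
      indCount (threshOf (σ ++ [false, true] ++ List.replicate (j - 2) false ++ [true, false] ++ ρ)) <
        indCount (threshOf (σ ++ [true] ++ List.replicate j false ++ [true] ++ ρ)) ∧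
      ∀ k : ℕ,
        indCountK (threshOf (σ ++ [false, true] ++ List.replicate (j - 2) false ++ [true, false] ++ ρ)) k ≤
          indCountK (threshOf (σ ++ [true] ++ List.replicate j false ++ [true] ++ ρ)) k := by
  obtain ⟨i, rfl⟩ := Nat.exists_eq_add_of_le' hj
  rw [show σ ++ [true] ++ List.replicate (i + 2) false ++ [true] ++ ρ =
      σ ++ (true :: List.replicate (i + 2) false ++ true :: ρ) by simp,
    show σ ++ [false, true] ++ List.replicate (i + 2 - 2) false ++ [true, false] ++ ρ =
      σ ++ (false :: true :: List.replicate i false ++ true :: false :: ρ) by simp]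
  have hpoly := indepPoly_threshOf_append_of_eq_add σ (indepPoly_threshOf_shift_bracket i ρ)
  refine ⟨by simp; omega, edgeCount_threshOf_append_congr σ (by simp; omega)
    (edgeCount_threshOf_shift_bracket i ρ), ?_, fun k => ?_⟩
  · rw [← eval_one_indepPoly, ← eval_one_indepPoly, hpoly, eval_add, lt_add_iff_pos_right]
    simp only [eval_mul, eval_pow, eval_add, eval_one, eval_X, eval_finsetSum]
    positivity
  · rw [← coeff_indepPoly, ← coeff_indepPoly, hpoly, coeff_add]
    exact Nat.le_add_right _ _
end
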